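/- arXiv:cond-mat/0410308 — 8 statements merged into one kernel-verified Lean document; each statement's English description precedes it below -/
import Mathlib

section
/- Let H be a Hermitian operator on a finite-dimensional Hilbert space, φ a normalized state with energy mean ⟨E⟩ and root-mean-square energy width ΔE (with respect to the spectral measure of φ). Let U(t) = exp(iHt/ħ). Then for any α > 1 and any time t with 0 ≤ t < ħπ/(2αΔE), the survival amplitude satisfies |⟨φ|U(t)|φ⟩| ≥ (1 − 1/α²)·cos(αΔE t/ħ) − 1/α². -/
/-!
Expanding `φ` in the eigenbasis gives `⟨φ|U(t)|φ⟩ = ∑ p_k e^{iE_k t/ħ}`. Its modulus dominates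
the real part after any phase rotation, hence `∑ p_k cos((E_k − ⟨E⟩) t/ħ)`. By Chebyshev the levels
with `|E_k − ⟨E⟩| > αΔE` carry weight at most `1/α²`, and there the cosine is at least `−1`; on the
other levels the phase stays in `[0, π/2)`, so the cosine is at least `cos(αΔE t/ħ)`.
-/

open scoped InnerProductSpace
open Finset Real

theorem OrthonormalBasis.inner_map_self_eq_sum {ι 𝕜 E : Type*} [Fintype ι] [RCLike 𝕜]
    [NormedAddCommGroup E] [InnerProductSpace 𝕜 E] (b : OrthonormalBasis ι 𝕜 E)
    {U : E →ₗ[𝕜] E} {c : ι → 𝕜} (hU : ∀ i, U (b i) = c i • b i) (x : E) :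
    ⟪x, U x⟫_𝕜 = ∑ i, (‖⟪b i, x⟫_𝕜‖ ^ 2 : 𝕜) * c i := by
  have hUx : U x = ∑ i, (⟪b i, x⟫_𝕜 * c i) • b i := by
    conv_lhs => rw [← b.sum_repr' x]
    simp only [map_sum, map_smul, hU, smul_smul]
  rw [hUx, inner_sum]
  refine sum_congr rfl fun i _ => ?_
  rw [inner_smul_right, ← inner_conj_symm x (b i), mul_right_comm, mul_comm ⟪b i, x⟫_𝕜,
    RCLike.conj_mul]

theorem sum_mul_cos_sub_le_norm_sum_mul_exp {ι : Type*} [Fintype ι] (p y : ι → ℝ) (a : ℝ) :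
    ∑ k, p k * cos (y k - a) ≤ ‖∑ k, (p k : ℂ) * Complex.exp (y k * Complex.I)‖ := by
  set z := ∑ k, (p k : ℂ) * Complex.exp (y k * Complex.I)
  have hre : (Complex.exp (↑(-a) * Complex.I) * z).re = ∑ k, p k * cos (y k - a) := by
    simp only [z, mul_sum, Complex.re_sum]
    refine sum_congr rfl fun k _ => ?_
    rw [mul_left_comm, ← Complex.exp_add, ← add_mul, ← Complex.ofReal_add,
      Complex.re_ofReal_mul, Complex.exp_ofReal_mul_I_re, neg_add_eq_sub]
  calc ∑ k, p k * cos (y k - a) = (Complex.exp (↑(-a) * Complex.I) * z).re := hre.symm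
    _ ≤ ‖Complex.exp (↑(-a) * Complex.I) * z‖ := Complex.re_le_norm _
    _ = ‖z‖ := by rw [norm_mul, Complex.norm_exp_ofReal_mul_I, one_mul]

section WeightedSums

variable {ι : Type*} [Fintype ι] {p : ι → ℝ}

theorem sq_mul_sum_tail_le_sum_mul_sq (hp : ∀ k, 0 ≤ p k) (x : ι → ℝ) (m : ℝ) {c : ℝ}
    (hc : 0 ≤ c) : c ^ 2 * ∑ k with c < |x k - m|, p k ≤ ∑ k, p k * (x k - m) ^ 2 := by
  rw [mul_sum]
  calc ∑ k with c < |x k - m|, c ^ 2 * p k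
      ≤ ∑ k with c < |x k - m|, p k * (x k - m) ^ 2 := by
        refine sum_le_sum fun k hk => ?_
        have hck : c ^ 2 ≤ (x k - m) ^ 2 := by
          rw [← sq_abs (x k - m)]
          exact pow_le_pow_left₀ hc (mem_filter.mp hk).2.le 2
        nlinarith [hp k]
    _ ≤ ∑ k, p k * (x k - m) ^ 2 :=
        sum_le_sum_of_subset_of_nonneg (filter_subset _ _)
          fun k _ _ => mul_nonneg (hp k) (sq_nonneg _)

theorem sum_mul_cos_ge_of_tail (hp : ∀ k, 0 ≤ p k) (hp1 : ∑ k, p k = 1) (x : ι → ℝ)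
    (m : ℝ) {c τ : ℝ} (hτ : 0 ≤ τ) (hcτ : c * τ ≤ π) :
    (1 - ∑ k with c < |x k - m|, p k) * cos (c * τ) - ∑ k with c < |x k - m|, p k
      ≤ ∑ k, p k * cos ((x k - m) * τ) := by
  set q := ∑ k with c < |x k - m|, p k
  have hsplit := sum_filter_add_sum_filter_not univ (fun k => c < |x k - m|) p
  have hcore :
      (1 - q) * cos (c * τ) ≤ ∑ k with ¬c < |x k - m|, p k * cos ((x k - m) * τ) := by
    rw [show 1 - q = ∑ k with ¬c < |x k - m|, p k by linarith, sum_mul]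
    refine sum_le_sum fun k hk => mul_le_mul_of_nonneg_left ?_ (hp k)
    rw [← cos_abs ((x k - m) * τ), abs_mul, abs_of_nonneg hτ]
    exact cos_le_cos_of_nonneg_of_le_pi (by positivity) hcτ
      (mul_le_mul_of_nonneg_right (not_lt.mp (mem_filter.mp hk).2) hτ)
  have htail : -q ≤ ∑ k with c < |x k - m|, p k * cos ((x k - m) * τ) := by
    rw [← sum_neg_distrib]
    exact sum_le_sum fun k _ => by nlinarith [neg_one_le_cos ((x k - m) * τ), hp k]
  rw [← sum_filter_add_sum_filter_not univ (fun k => c < |x k - m|)]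
  linarith

theorem sum_mul_cos_ge_of_variance (hp : ∀ k, 0 ≤ p k) (hp1 : ∑ k, p k = 1) (x : ι → ℝ)
    (m : ℝ) {c τ : ℝ} (hc : 0 < c) (hτ : 0 ≤ τ) (hcτ : c * τ ≤ π) :
    (1 - (∑ k, p k * (x k - m) ^ 2) / c ^ 2) * cos (c * τ) - (∑ k, p k * (x k - m) ^ 2) / c ^ 2
      ≤ ∑ k, p k * cos ((x k - m) * τ) := by
  have hq : ∑ k with c < |x k - m|, p k ≤ (∑ k, p k * (x k - m) ^ 2) / c ^ 2 := by
    rw [le_div_iff₀ (by positivity), mul_comm]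
    exact sq_mul_sum_tail_le_sum_mul_sq hp x m hc.le
  refine le_trans ?_ (sum_mul_cos_ge_of_tail hp hp1 x m hτ hcτ)
  -- `(1 - q) cos θ - q = cos θ - q (1 + cos θ)` is antitone in `q`
  nlinarith [neg_one_le_cos (c * τ)]

end WeightedSums

theorem survival_amplitude_bound_general
    {n : ℕ} {E : Type*} [NormedAddCommGroup E] [InnerProductSpace ℂ E]
    (ψ : OrthonormalBasis (Fin n) ℂ E) (En : Fin n → ℝ)
    (φ : E) (hφ : ‖φ‖ = 1)
    (p : Fin n → ℝ) (hp : ∀ k, p k = ‖⟪ψ k, φ⟫_ℂ‖ ^ 2)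
    (Emean : ℝ)
    (ΔE : ℝ) (hvar : ΔE ^ 2 = ∑ k, p k * (En k - Emean) ^ 2)
    (hbar : ℝ) (hhbar : 0 < hbar)
    (t : ℝ) (ht0 : 0 ≤ t)
    (U : E →ₗ[ℂ] E)
    (hU : ∀ k, U (ψ k) = Complex.exp (Complex.I * (En k : ℂ) * (t : ℂ) / (hbar : ℂ)) • ψ k)
    (α : ℝ)
    (ht : t < hbar * Real.pi / (2 * α * ΔE)) :
    (1 - 1 / α ^ 2) * Real.cos (α * ΔE * t / hbar) - 1 / α ^ 2 ≤ ‖⟪φ, U φ⟫_ℂ‖ := by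
  have hαΔE : 0 < α * ΔE := by
    have := (div_pos_iff_of_pos_left (by positivity : 0 < hbar * π)).mp (ht0.trans_lt ht)
    linarith
  have hθ : α * ΔE * (t / hbar) ≤ π := by
    rw [lt_div_iff₀ (by linarith)] at ht
    rw [← mul_div_assoc, div_le_iff₀ hhbar]
    nlinarith [mul_nonneg hαΔE.le ht0]
  have hp1 : ∑ k, p k = 1 := by simp only [hp, ψ.sum_sq_norm_inner_right, hφ, one_pow]
  have hamp : ⟪φ, U φ⟫_ℂ = ∑ k, (p k : ℂ) * Complex.exp (↑(En k * (t / hbar)) * Complex.I) := by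
    rw [ψ.inner_map_self_eq_sum hU]
    refine sum_congr rfl fun k _ => ?_
    rw [hp]
    push_cast
    congr 2
    ring
  have hratio : ΔE ^ 2 / (α * ΔE) ^ 2 = 1 / α ^ 2 := by
    have hα : α ≠ 0 := left_ne_zero_of_mul hαΔE.ne'
    have hΔE : ΔE ≠ 0 := right_ne_zero_of_mul hαΔE.ne'
    field_simp
  calc (1 - 1 / α ^ 2) * cos (α * ΔE * t / hbar) - 1 / α ^ 2
      = (1 - ΔE ^ 2 / (α * ΔE) ^ 2) * cos (α * ΔE * (t / hbar)) - ΔE ^ 2 / (α * ΔE) ^ 2 := by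
        rw [hratio, mul_div_assoc]
    _ ≤ ∑ k, p k * cos ((En k - Emean) * (t / hbar)) := by
        rw [hvar]
        exact sum_mul_cos_ge_of_variance (fun k => hp k ▸ by positivity) hp1 En Emean hαΔE
          (by positivity) hθ
    _ = ∑ k, p k * cos (En k * (t / hbar) - Emean * (t / hbar)) := by simp only [sub_mul]
    _ ≤ ‖⟪φ, U φ⟫_ℂ‖ := hamp ▸ sum_mul_cos_sub_le_norm_sum_mul_exp p _ _

/-- survival-amplitude lower bound.  `U` is the time evolution
`exp(iHt/hbar)`, specified by its action on the orthonormal eigenbasis `ψ` of the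
Hermitian operator `H` with eigenvalues `En`.  For `α > 1` and
`0 ≤ t < hbarπ/(2αΔE)`, the survival amplitude satisfies
`|⟨φ|U(t)|φ⟩| ≥ (1 − 1/α²)·cos(αΔE t/hbar) − 1/α²`. -/
theorem survival_amplitude_bound
    {n : ℕ} {E : Type*} [NormedAddCommGroup E] [InnerProductSpace ℂ E]
    [FiniteDimensional ℂ E]
    (H : E →ₗ[ℂ] E) (hH : LinearMap.IsSymmetric H)
    (ψ : OrthonormalBasis (Fin n) ℂ E) (En : Fin n → ℝ)
    (heig : ∀ k, H (ψ k) = (En k : ℂ) • ψ k)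
    (φ : E) (hφ : ‖φ‖ = 1)
    (p : Fin n → ℝ) (hp : ∀ k, p k = ‖⟪ψ k, φ⟫_ℂ‖ ^ 2)
    (Emean : ℝ) (hmean : Emean = ∑ k, p k * En k)
    (ΔE : ℝ) (hΔE : 0 ≤ ΔE) (hvar : ΔE ^ 2 = ∑ k, p k * (En k - Emean) ^ 2)
    (hbar : ℝ) (hhbar : 0 < hbar)
    (t : ℝ) (ht0 : 0 ≤ t)
    (U : E →ₗ[ℂ] E)
    (hU : ∀ k, U (ψ k) = Complex.exp (Complex.I * (En k : ℂ) * (t : ℂ) / (hbar : ℂ)) • ψ k)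
    (α : ℝ) (hα : 1 < α)
    (ht : t < hbar * Real.pi / (2 * α * ΔE)) :
    (1 - 1 / α ^ 2) * Real.cos (α * ΔE * t / hbar) - 1 / α ^ 2 ≤ ‖⟪φ, U φ⟫_ℂ‖ :=
  survival_amplitude_bound_general ψ En φ hφ p hp Emean ΔE hvar hbar hhbar t ht0 U hU α ht
end

section
/- Let H be a Hermitian operator, φ a normalized state with energy width ΔE, and α > 1. For times t < ħπ/(2αΔE), one can write U(t)|φ⟩ = e^{iθ}√(1−λ²)|φ⟩ + λ|r⟩ where |r⟩ is a unit vector orthogonal to |φ⟩, θ ∈ ℝ, and λ² ≤ 1 − (1 − 1/α²)cos(αΔE t/ħ) + 1/α². -/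
/-!
With `A = ⟪φ, U φ⟫`, the residual `r = U φ - A • φ` is orthogonal to `φ`, and since `U` is
unitary, `‖r‖² = 1 - |A|²`. Rotating `A` by the mean-energy phase gives
`|A| ≥ ∑ pₖ cos ((Eₖ - Ē) t / ħ) ≥ 1 - τ² / 2` with `τ = ΔE t / ħ`, hence `|A|² ≥ 1 - τ²`.
With `s = α ΔE t / ħ ∈ [0, π/2)` and `d = 1/α²` we have `τ² = d s²`, and
`(1 - d) cos s - d ≤ 1 - d s²` follows from `cos s ≤ 1 - 2 s² / π²` and `π² < 10` once `d ≤ 1/2`;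
for `d > 1/2` the left side is already nonpositive.
-/
open scoped InnerProductSpace

namespace OrthonormalBasis

variable {𝕜 E ι : Type*} [RCLike 𝕜] [NormedAddCommGroup E] [InnerProductSpace 𝕜 E] [Fintype ι]
  (b : OrthonormalBasis ι 𝕜 E) {T : E →ₗ[𝕜] E} {μ : ι → 𝕜}

lemma inner_map_of_apply_eq_smul (hT : ∀ i, T (b i) = μ i • b i) (x : E) (i : ι) :
    ⟪b i, T x⟫_𝕜 = μ i * ⟪b i, x⟫_𝕜 := by
  have hTx : T x = ∑ j, (μ j * ⟪b j, x⟫_𝕜) • b j := by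
    conv_lhs => rw [← b.sum_repr' x]
    simp only [map_sum, map_smul, hT, smul_smul, mul_comm]
  rw [hTx, b.orthonormal.inner_right_fintype]

lemma inner_map_self_of_apply_eq_smul (hT : ∀ i, T (b i) = μ i • b i) (x : E) :
    ⟪x, T x⟫_𝕜 = ∑ i, ((‖⟪b i, x⟫_𝕜‖ ^ 2 : ℝ) : 𝕜) * μ i := by
  rw [← b.sum_inner_mul_inner]
  refine Finset.sum_congr rfl fun i _ => ?_
  rw [b.inner_map_of_apply_eq_smul hT, ← inner_conj_symm, RCLike.ofReal_pow, ← RCLike.conj_mul]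
  ring

lemma norm_map_of_apply_eq_smul (hT : ∀ i, T (b i) = μ i • b i) (hμ : ∀ i, ‖μ i‖ = 1)
    (x : E) : ‖T x‖ = ‖x‖ := by
  have hsq : ‖T x‖ ^ 2 = ‖x‖ ^ 2 := by
    simp only [← b.sum_sq_norm_inner_right, b.inner_map_of_apply_eq_smul hT, norm_mul, hμ,
      one_mul]
  exact (pow_left_inj₀ (norm_nonneg _) (norm_nonneg _) two_ne_zero).mp hsq

end OrthonormalBasis

lemma one_sub_le_sq_of_one_sub_div_two_le {v a : ℝ} (ha : 0 ≤ a) (h : 1 - v / 2 ≤ a) :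
    1 - v ≤ a ^ 2 := by
  nlinarith [sq_nonneg v, sq_nonneg (a - (1 - v / 2))]

lemma one_sub_sum_mul_sq_le_norm_sum_mul_exp_sq {ι : Type*} [Fintype ι] {p : ι → ℝ}
    (hp : ∀ i, 0 ≤ p i) (hp1 : ∑ i, p i = 1) (x : ι → ℝ) (m : ℝ) :
    1 - ∑ i, p i * (x i - m) ^ 2 ≤ ‖∑ i, (p i : ℂ) * Complex.exp (x i * Complex.I)‖ ^ 2 := by
  set A := ∑ i, (p i : ℂ) * Complex.exp (x i * Complex.I)
  have hre : (Complex.exp (↑(-m) * Complex.I) * A).re = ∑ i, p i * Real.cos (x i - m) := by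
    simp only [A, Finset.mul_sum, Complex.re_sum]
    refine Finset.sum_congr rfl fun i _ => ?_
    rw [mul_left_comm, ← Complex.exp_add, ← Complex.exp_ofReal_mul_I_re (x i - m),
      Complex.re_ofReal_mul]
    push_cast
    ring_nf
  have hcos : 1 - (∑ i, p i * (x i - m) ^ 2) / 2 ≤ ∑ i, p i * Real.cos (x i - m) := calc
    1 - (∑ i, p i * (x i - m) ^ 2) / 2 = ∑ i, p i * (1 - (x i - m) ^ 2 / 2) := by
      simp only [mul_sub, mul_one, Finset.sum_sub_distrib, hp1, Finset.sum_div, mul_div_assoc]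
    _ ≤ ∑ i, p i * Real.cos (x i - m) := Finset.sum_le_sum fun i _ =>
      mul_le_mul_of_nonneg_left Real.one_sub_sq_div_two_le_cos (hp i)
  have hnorm : (Complex.exp (↑(-m) * Complex.I) * A).re ≤ ‖A‖ := by
    simpa only [norm_mul, Complex.norm_exp_ofReal_mul_I, one_mul] using
      Complex.re_le_norm (Complex.exp (↑(-m) * Complex.I) * A)
  exact one_sub_le_sq_of_one_sub_div_two_le (norm_nonneg A) (by linarith)

lemma abs_mul_div_le_pi_div_two_of_lt {a h t : ℝ} (ht0 : 0 ≤ t)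
    (ht : t < h * Real.pi / (2 * a)) : |a * t / h| ≤ Real.pi / 2 := by
  have hbound : h * Real.pi / (2 * a) = h / a * (Real.pi / 2) := by ring
  rw [hbound] at ht
  have hc : 0 < h / a :=
    (mul_pos_iff_of_pos_right (by positivity)).mp (ht0.trans_lt ht)
  have hq : a * t / h = t / (h / a) := by rw [div_div_eq_mul_div]; ring
  rw [hq, abs_of_nonneg (div_nonneg ht0 hc.le), div_le_iff₀ hc]
  linarith

lemma one_sub_mul_cos_sub_le {d s a : ℝ} (hs : |s| ≤ Real.pi / 2) (hd : 0 ≤ d) (ha : 0 ≤ a)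
    (h : 1 - d * s ^ 2 ≤ a) : (1 - d) * Real.cos s - d ≤ a := by
  rcases le_or_gt d (1 / 2) with hd2 | hd2
  · have hπ := Real.pi_lt_d2
    have hπ0 := Real.pi_pos
    have hs2 : s ^ 2 ≤ 5 / 2 := by
      rw [← sq_abs]
      nlinarith [abs_nonneg s]
    have hcos : s ^ 2 / 5 ≤ 1 - Real.cos s := by
      have := Real.cos_le_one_sub_mul_cos_sq (hs.trans (by linarith))
      have h10 : 1 / 5 ≤ 2 / Real.pi ^ 2 := by
        rw [div_le_div_iff₀ (by norm_num) (by positivity)]; nlinarith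
      nlinarith [mul_le_mul_of_nonneg_right h10 (sq_nonneg s)]
    nlinarith [mul_le_mul_of_nonneg_left hcos (by linarith : (0:ℝ) ≤ 1 - d),
      mul_nonneg (by linarith : (0:ℝ) ≤ 1 - 2 * d) (sq_nonneg s),
      mul_nonneg hd (by linarith : (0:ℝ) ≤ 2 - 4 * s ^ 2 / 5)]
  · nlinarith [Real.neg_one_le_cos s, Real.cos_le_one s,
      mul_le_mul_of_nonneg_right hd2.le (by linarith [Real.neg_one_le_cos s] : 0 ≤ 1 + Real.cos s)]

lemma exists_phase_decomposition {E : Type*} [NormedAddCommGroup E] [InnerProductSpace ℂ E]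
    {φ v : E} (hφ : ‖φ‖ = 1) (hv : ‖v‖ = 1) :
    ∃ (θ : ℝ) (r : E), ⟪φ, r⟫_ℂ = 0 ∧
      v = (Complex.exp (θ * Complex.I) * ((Real.sqrt (1 - ‖r‖ ^ 2) : ℝ) : ℂ)) • φ + r ∧
      ‖r‖ ^ 2 = 1 - ‖⟪φ, v⟫_ℂ‖ ^ 2 := by
  set A := ⟪φ, v⟫_ℂ
  set r := v - A • φ
  have hφr : ⟪φ, r⟫_ℂ = 0 := by
    rw [inner_sub_right, inner_smul_right, inner_self_eq_norm_sq_to_K, hφ]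
    simp [A]
  have hr : ‖r‖ ^ 2 = 1 - ‖A‖ ^ 2 := by
    have hpyth := norm_add_sq_eq_norm_sq_add_norm_sq_of_inner_eq_zero (A • φ) r
      (by rw [inner_smul_left, hφr, mul_zero])
    rw [add_sub_cancel, hv, norm_smul, hφ] at hpyth
    linarith
  have hsqrt : Real.sqrt (1 - ‖r‖ ^ 2) = ‖A‖ := by
    rw [hr, sub_sub_cancel, Real.sqrt_sq (norm_nonneg _)]
  refine ⟨A.arg, r, hφr, ?_, hr⟩
  rw [hsqrt, mul_comm, Complex.norm_mul_exp_arg_mul_I, add_sub_cancel]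

theorem evolved_state_decomposition_general
    {n : ℕ} {E : Type*} [NormedAddCommGroup E] [InnerProductSpace ℂ E]
    (ψ : OrthonormalBasis (Fin n) ℂ E) (En : Fin n → ℝ)
    (φ : E) (hφ : ‖φ‖ = 1)
    (p : Fin n → ℝ) (hp : ∀ k, p k = ‖⟪ψ k, φ⟫_ℂ‖ ^ 2)
    (Emean : ℝ)
    (ΔE : ℝ) (hvar : ΔE ^ 2 = ∑ k, p k * (En k - Emean) ^ 2)
    (hbar : ℝ)
    (t : ℝ) (ht0 : 0 ≤ t)
    (U : E →ₗ[ℂ] E)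
    (hU : ∀ k, U (ψ k) = Complex.exp (Complex.I * (En k : ℂ) * (t : ℂ) / (hbar : ℂ)) • ψ k)
    (α : ℝ)
    (ht : t < hbar * Real.pi / (2 * α * ΔE)) :
    ∃ (θ : ℝ) (r : E), ⟪φ, r⟫_ℂ = 0 ∧
      U φ = (Complex.exp ((θ : ℂ) * Complex.I) *
              ((Real.sqrt (1 - ‖r‖ ^ 2) : ℝ) : ℂ)) • φ + r ∧
      ‖r‖ ^ 2 ≤ 1 - (1 - 1 / α ^ 2) * Real.cos (α * ΔE * t / hbar) + 1 / α ^ 2 := by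
  have hphase : ∀ k, Complex.exp (Complex.I * (En k : ℂ) * (t : ℂ) / (hbar : ℂ)) =
      Complex.exp (↑(En k * t / hbar) * Complex.I) := fun k => by push_cast; ring_nf
  simp_rw [hphase] at hU
  have hpsum : ∑ k, p k = 1 := by simp only [hp, ψ.sum_sq_norm_inner_right, hφ, one_pow]
  have hUφ : ‖U φ‖ = 1 := by
    rw [ψ.norm_map_of_apply_eq_smul hU fun k => Complex.norm_exp_ofReal_mul_I _, hφ]
  have hspread : ∑ k, p k * (En k * t / hbar - Emean * t / hbar) ^ 2 = (ΔE * t / hbar) ^ 2 := by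
    rw [div_pow, mul_pow, hvar, Finset.sum_mul, Finset.sum_div]
    exact Finset.sum_congr rfl fun k _ => by ring
  have hsurvival : 1 - (ΔE * t / hbar) ^ 2 ≤ ‖⟪φ, U φ⟫_ℂ‖ ^ 2 := by
    have hamplitude : ⟪φ, U φ⟫_ℂ =
        ∑ k, (p k : ℂ) * Complex.exp (↑(En k * t / hbar) * Complex.I) := by
      simp only [ψ.inner_map_self_of_apply_eq_smul hU, hp]
      rfl
    rw [hamplitude, ← hspread]
    exact one_sub_sum_mul_sq_le_norm_sum_mul_exp_sq (fun k => (hp k).symm ▸ sq_nonneg _) hpsum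
      (fun k => En k * t / hbar) (Emean * t / hbar)
  obtain ⟨θ, r, hφr, hdecomp, hr⟩ := exists_phase_decomposition hφ hUφ
  refine ⟨θ, r, hφr, hdecomp, ?_⟩
  have hα : α ≠ 0 := by
    rintro rfl
    simp only [mul_zero, zero_mul, div_zero] at ht
    linarith
  have hτ : 1 / α ^ 2 * (α * ΔE * t / hbar) ^ 2 = (ΔE * t / hbar) ^ 2 := by field_simp
  have hbound := one_sub_mul_cos_sub_le (abs_mul_div_le_pi_div_two_of_lt ht0 (by rwa [← mul_assoc]))
    (by positivity) (sq_nonneg _) (hτ ▸ hsurvival)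
  linarith

/-- decomposition of the evolved state.  For `t < hbarπ/(2αΔE)` one
can write `U(t)|φ⟩ = e^{iθ}√(1−λ²)|φ⟩ + r` with `r ⟂ φ` and residual weight
`λ² = ‖r‖² ≤ 1 − (1 − 1/α²)cos(αΔE t/hbar) + 1/α²`. -/
theorem evolved_state_decomposition
    {n : ℕ} {E : Type*} [NormedAddCommGroup E] [InnerProductSpace ℂ E]
    [FiniteDimensional ℂ E]
    (H : E →ₗ[ℂ] E) (hH : LinearMap.IsSymmetric H)
    (ψ : OrthonormalBasis (Fin n) ℂ E) (En : Fin n → ℝ)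
    (heig : ∀ k, H (ψ k) = (En k : ℂ) • ψ k)
    (φ : E) (hφ : ‖φ‖ = 1)
    (p : Fin n → ℝ) (hp : ∀ k, p k = ‖⟪ψ k, φ⟫_ℂ‖ ^ 2)
    (Emean : ℝ) (hmean : Emean = ∑ k, p k * En k)
    (ΔE : ℝ) (hΔE : 0 ≤ ΔE) (hvar : ΔE ^ 2 = ∑ k, p k * (En k - Emean) ^ 2)
    (hbar : ℝ) (hhbar : 0 < hbar)
    (t : ℝ) (ht0 : 0 ≤ t)
    (U : E →ₗ[ℂ] E)
    (hU : ∀ k, U (ψ k) = Complex.exp (Complex.I * (En k : ℂ) * (t : ℂ) / (hbar : ℂ)) • ψ k)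
    (α : ℝ) (hα : 1 < α)
    (ht : t < hbar * Real.pi / (2 * α * ΔE)) :
    ∃ (θ : ℝ) (r : E), ⟪φ, r⟫_ℂ = 0 ∧
      U φ = (Complex.exp ((θ : ℂ) * Complex.I) *
              ((Real.sqrt (1 - ‖r‖ ^ 2) : ℝ) : ℂ)) • φ + r ∧
      ‖r‖ ^ 2 ≤ 1 - (1 - 1 / α ^ 2) * Real.cos (α * ΔE * t / hbar) + 1 / α ^ 2 :=
  evolved_state_decomposition_general ψ En φ hφ p hp Emean ΔE hvar hbar t ht0 U hU α ht
end

section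
/- Let H = H₀ + V on a finite-dimensional Hilbert space, where H₀ and V are Hermitian. Suppose there are orthogonal projections Π_↑, Π_↓ with Π_↑ + Π_↓ = I, both commuting with H₀, such that Π_↑H₀Π_↑ ≥ a·Π_↑ (on the range of Π_↑), Π_↓H₀Π_↓ ≤ b·Π_↓ with a > b, and V = Π_↑VΠ_↓ + Π_↓VΠ_↑ is purely off-diagonal with ‖Π_↑VΠ_↓‖ ≤ V_max. If ψ is a normalized eigenvector of H with c_↑² = ⟨ψ|Π_↑|ψ⟩, then c_↑⁴ − c_↑² + V_max²/(a−b)² ≥ 0; consequently, if 2V_max < a − b, then either c_↑² ≥ ξ₁ or c_↑² ≤ ξ₂, where ξ_{1,2} = 1/2 ± (1/2)√(1 − 4V_max²/(a−b)²). -/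
open scoped InnerProductSpace

/-! Write `ψ = φ + χ` with `φ = Π↑ ψ` and `χ = Π↓ ψ`. Pairing `(H₀ + V) ψ = E ψ` with `φ` and
with `χ` gives `re ⟪φ, H₀ φ⟫ + t = E ‖φ‖²` and `re ⟪χ, H₀ χ⟫ + t = E ‖χ‖²` with the same coupling
`t = re ⟪φ, V χ⟫`, because `H₀` preserves the blocks while the Hermitian `V` swaps them. Weighting
these by `‖χ‖²` and `‖φ‖²` and inserting the bounds `a`, `b` gives
`(a - b) ‖φ‖² ‖χ‖² ≤ t (‖φ‖² - ‖χ‖²) ≤ |t| ≤ V_max ‖φ‖ ‖χ‖`, hence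
`c↑² (1 - c↑²) ≤ V_max² / (a - b)²`: `c↑²` lies outside the open interval between the roots
`ξ₂ < ξ₁` of the quadratic. -/

namespace LinearMap

variable {𝕜 E : Type*} [RCLike 𝕜] [NormedAddCommGroup E] [InnerProductSpace 𝕜 E]
  {p : E →ₗ[𝕜] E}

open RCLike

theorem IsSymmetricProjection.one_sub (hp : p.IsSymmetricProjection) :
    (1 - p).IsSymmetricProjection :=
  ⟨hp.isIdempotentElem.one_sub, IsSymmetric.one.sub hp.isSymmetric⟩

theorem IsSymmetricProjection.inner_apply_self (hp : p.IsSymmetricProjection) (x : E) :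
    ⟪x, p x⟫_𝕜 = (‖p x‖ : 𝕜) ^ 2 :=
  calc ⟪x, p x⟫_𝕜 = ⟪x, p (p x)⟫_𝕜 := by rw [← Module.End.mul_apply, hp.isIdempotentElem.eq]
    _ = ⟪p x, p x⟫_𝕜 := (hp.isSymmetric x (p x)).symm
    _ = (‖p x‖ : 𝕜) ^ 2 := inner_self_eq_norm_sq_to_K _

theorem apply_add_one_sub_apply (p : E →ₗ[𝕜] E) (x : E) :
    p x + (1 - p) x = x := by
  rw [← add_apply, add_sub_cancel, Module.End.one_apply]

theorem IsSymmetricProjection.norm_sq_apply_add_norm_sq_one_sub_apply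
    (hp : p.IsSymmetricProjection) (x : E) :
    ‖p x‖ ^ 2 + ‖(1 - p) x‖ ^ 2 = ‖x‖ ^ 2 := by
  have h : ⟪x, x⟫_𝕜 = (‖p x‖ : 𝕜) ^ 2 + (‖(1 - p) x‖ : 𝕜) ^ 2 := by
    rw [← hp.inner_apply_self, ← hp.one_sub.inner_apply_self, ← inner_add_right,
      apply_add_one_sub_apply]
  rw [inner_self_eq_norm_sq_to_K] at h
  exact_mod_cast h.symm

theorem IsSymmetric.inner_apply_map_apply_eq_zero (hp : p.IsSymmetric) {M : E →ₗ[𝕜] E}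
    (hM : p * M * p = 0) (x y : E) : ⟪p x, M (p y)⟫_𝕜 = 0 := by
  rw [hp, ← Module.End.mul_apply, ← Module.End.mul_apply, hM, zero_apply, inner_zero_right]

theorem IsSymmetricProjection.inner_apply_map_one_sub_apply_eq_zero
    (hp : p.IsSymmetricProjection) {M : E →ₗ[𝕜] E} (hM : Commute p M) (x y : E) :
    ⟪p x, M ((1 - p) y)⟫_𝕜 = 0 := by
  have h : p * M * (1 - p) = 0 := by
    rw [hM.eq, mul_assoc, mul_sub, mul_one, hp.isIdempotentElem.eq, sub_self, mul_zero]
  rw [hp.isSymmetric, ← Module.End.mul_apply, ← Module.End.mul_apply, h, zero_apply,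
    inner_zero_right]

theorem IsSymmetricProjection.re_inner_diag_add_re_inner_offDiag_eq
    (hp : p.IsSymmetricProjection) {H₀ V : E →ₗ[𝕜] E} (hH₀ : Commute p H₀)
    (hV : p * V * p = 0) {x : E} {e : ℝ} (hx : (H₀ + V) x = (e : 𝕜) • x) :
    re ⟪p x, H₀ (p x)⟫_𝕜 + re ⟪p x, V ((1 - p) x)⟫_𝕜 = e * ‖p x‖ ^ 2 := by
  have hblocks : ⟪p x, (H₀ + V) x⟫_𝕜 = ⟪p x, H₀ (p x)⟫_𝕜 + ⟪p x, V ((1 - p) x)⟫_𝕜 :=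
    calc ⟪p x, (H₀ + V) x⟫_𝕜 = ⟪p x, (H₀ + V) (p x + (1 - p) x)⟫_𝕜 := by
          rw [apply_add_one_sub_apply]
      _ = ⟪p x, H₀ (p x)⟫_𝕜 + ⟪p x, V ((1 - p) x)⟫_𝕜 := by
          simp only [add_apply, map_add, inner_add_right,
            hp.inner_apply_map_one_sub_apply_eq_zero hH₀,
            hp.isSymmetric.inner_apply_map_apply_eq_zero hV, add_zero, zero_add]
  have h := congrArg re hblocks
  rw [hx, inner_smul_right, hp.isSymmetric x x, hp.inner_apply_self, map_add] at h
  rw [← h, ← ofReal_pow, ← ofReal_mul, ofReal_re]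

theorem IsSymmetricProjection.re_inner_diag_one_sub_add_re_inner_offDiag_eq
    (hp : p.IsSymmetricProjection) {H₀ V : E →ₗ[𝕜] E} (hH₀ : Commute p H₀)
    (hVsymm : V.IsSymmetric) (hV : (1 - p) * V * (1 - p) = 0) {x : E} {e : ℝ}
    (hx : (H₀ + V) x = (e : 𝕜) • x) :
    re ⟪(1 - p) x, H₀ ((1 - p) x)⟫_𝕜 + re ⟪p x, V ((1 - p) x)⟫_𝕜 = e * ‖(1 - p) x‖ ^ 2 := by
  have h := hp.one_sub.re_inner_diag_add_re_inner_offDiag_eq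
    ((Commute.one_left H₀).sub_left hH₀) hV hx
  rwa [sub_sub_cancel, ← hVsymm, ← inner_conj_symm (V _), conj_re] at h

end LinearMap

theorem sub_mul_mul_le_abs_of_add_eq_one {a b e t x y : ℝ} (hx : 0 ≤ x) (hy : 0 ≤ y)
    (hxy : x + y = 1) (h₁ : a * x + t ≤ e * x) (h₂ : e * y ≤ b * y + t) :
    (a - b) * (x * y) ≤ |t| :=
  calc (a - b) * (x * y) ≤ t * (x - y) := by
        nlinarith [mul_le_mul_of_nonneg_right h₁ hy, mul_le_mul_of_nonneg_right h₂ hx]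
    _ ≤ |t| * |x - y| := abs_mul t (x - y) ▸ le_abs_self _
    _ ≤ |t| :=
      mul_le_of_le_one_right (abs_nonneg t) (abs_sub_le_iff.2 ⟨by linarith, by linarith⟩)

theorem sq_mul_le_sq_of_mul_sq_le_mul {c s v : ℝ} (hc : 0 ≤ c) (hs : 0 ≤ s)
    (h : c * s ^ 2 ≤ v * s) : (c * s) ^ 2 ≤ v ^ 2 := by
  rcases hs.eq_or_lt with rfl | hs
  · simpa using sq_nonneg v
  have hcs : c * s ≤ v := le_of_mul_le_mul_right (by linarith [sq s]) hs
  exact pow_le_pow_left₀ (mul_nonneg hc hs.le) hcs 2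

theorem sq_mul_sq_le_div_sq_of_block_bounds {a b e t u w v : ℝ} (hab : b < a) (hu : 0 ≤ u)
    (hw : 0 ≤ w) (huw : u ^ 2 + w ^ 2 = 1) (h₁ : a * u ^ 2 + t ≤ e * u ^ 2)
    (h₂ : e * w ^ 2 ≤ b * w ^ 2 + t) (ht : |t| ≤ v * u * w) :
    u ^ 2 * w ^ 2 ≤ v ^ 2 / (a - b) ^ 2 := by
  have hgap := sub_mul_mul_le_abs_of_add_eq_one (sq_nonneg u) (sq_nonneg w) huw h₁ h₂
  have hprod : ((a - b) * (u * w)) ^ 2 ≤ v ^ 2 :=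
    sq_mul_le_sq_of_mul_sq_le_mul (sub_nonneg.2 hab.le) (mul_nonneg hu hw)
      (by linarith [mul_pow u w 2, mul_assoc v u w])
  rw [le_div_iff₀ (pow_pos (sub_pos.2 hab) 2)]
  linarith [mul_pow (a - b) (u * w) 2, mul_pow u w 2]

theorem le_or_le_of_sq_sub_add_nonneg {c q : ℝ} (h : 0 ≤ c ^ 2 - c + q) :
    c ≥ 1 / 2 + √(1 - 4 * q) / 2 ∨ c ≤ 1 / 2 - √(1 - 4 * q) / 2 := by
  have hroot : √(1 - 4 * q) ≤ |2 * c - 1| := by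
    rw [← Real.sqrt_sq_eq_abs]
    exact Real.sqrt_le_sqrt (by nlinarith)
  rcases le_abs'.1 hroot with hc | hc
  · right; linarith
  · left; linarith

theorem eigenstate_splitting_general
    {E : Type*} [NormedAddCommGroup E] [InnerProductSpace ℂ E]
    (H0 V P : E →ₗ[ℂ] E)
    (hV : LinearMap.IsSymmetric V)
    (hP : LinearMap.IsSymmetric P) (hPproj : P ∘ₗ P = P)
    (hPH0 : P ∘ₗ H0 = H0 ∘ₗ P)
    (a b Vmax : ℝ) (hab : b < a)
    (ha : ∀ v, P v = v → a * ‖v‖ ^ 2 ≤ (⟪v, H0 v⟫_ℂ).re)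
    (hb : ∀ v, ((LinearMap.id : E →ₗ[ℂ] E) - P) v = v →
      (⟪v, H0 v⟫_ℂ).re ≤ b * ‖v‖ ^ 2)
    (hoff1 : P ∘ₗ V ∘ₗ P = 0)
    (hoff2 : ((LinearMap.id : E →ₗ[ℂ] E) - P) ∘ₗ V ∘ₗ
        ((LinearMap.id : E →ₗ[ℂ] E) - P) = 0)
    (hVbound : ∀ v w, ‖⟪v, V w⟫_ℂ‖ ≤ Vmax * ‖v‖ * ‖w‖)
    (ψ : E) (hψ : ‖ψ‖ = 1) (Ek : ℝ) (heig : (H0 + V) ψ = (Ek : ℂ) • ψ)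
    (c2 : ℝ) (hc2 : c2 = (⟪ψ, P ψ⟫_ℂ).re) :
    c2 ^ 2 - c2 + Vmax ^ 2 / (a - b) ^ 2 ≥ 0 ∧
      (2 * Vmax < a - b →
        c2 ≥ 1 / 2 + Real.sqrt (1 - 4 * Vmax ^ 2 / (a - b) ^ 2) / 2 ∨
        c2 ≤ 1 / 2 - Real.sqrt (1 - 4 * Vmax ^ 2 / (a - b) ^ 2) / 2) := by
  rw [← Module.End.one_eq_id] at hb hoff2
  have hp : P.IsSymmetricProjection := ⟨hPproj, hP⟩
  have hup := hp.re_inner_diag_add_re_inner_offDiag_eq hPH0 ((mul_assoc P V P).trans hoff1) heig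
  have hdown := hp.re_inner_diag_one_sub_add_re_inner_offDiag_eq hPH0 hV
    ((mul_assoc _ V _).trans hoff2) heig
  simp only [RCLike.re_to_complex] at hup hdown
  have hnorms : ‖P ψ‖ ^ 2 + ‖(1 - P) ψ‖ ^ 2 = 1 := by
    rw [hp.norm_sq_apply_add_norm_sq_one_sub_apply, hψ, one_pow]
  have hweights : ‖P ψ‖ ^ 2 * ‖(1 - P) ψ‖ ^ 2 ≤ Vmax ^ 2 / (a - b) ^ 2 :=
    sq_mul_sq_le_div_sq_of_block_bounds (e := Ek) hab (norm_nonneg _) (norm_nonneg _) hnorms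
      (by linarith [ha _ (LinearMap.congr_fun hPproj ψ)])
      (by linarith [hb _ (LinearMap.congr_fun hp.one_sub.isIdempotentElem.eq ψ)])
      ((Complex.abs_re_le_norm _).trans (hVbound _ _))
  have hc2P : c2 = ‖P ψ‖ ^ 2 := by
    rw [hc2, hp.inner_apply_self]
    norm_cast
  have hquad : 0 ≤ c2 ^ 2 - c2 + Vmax ^ 2 / (a - b) ^ 2 := by
    have hc2w : 1 - c2 = ‖(1 - P) ψ‖ ^ 2 := by linarith
    have hprod : c2 * (1 - c2) ≤ Vmax ^ 2 / (a - b) ^ 2 := by rwa [hc2w, hc2P]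
    linarith
  refine ⟨hquad, fun _ => ?_⟩
  rw [mul_div_assoc]
  exact le_or_le_of_sq_sub_add_nonneg hquad

/-- eigenstate splitting.  `H = H₀ + V` with `H₀` block-bounded
(`≥ a` on ran Π_↑, `≤ b` on ran Π_↓, `a > b`), `V` purely off-diagonal with
block norm `≤ V_max`.  For a normalized eigenvector `ψ` of `H`, the weight
`c↑² = ⟨ψ|Π_↑|ψ⟩` satisfies `c↑⁴ − c↑² + V_max²/(a−b)² ≥ 0`; consequently, if
`2V_max < a − b`, then `c↑² ≥ ξ₁` or `c↑² ≤ ξ₂`. -/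
theorem eigenstate_splitting
    {E : Type*} [NormedAddCommGroup E] [InnerProductSpace ℂ E]
    [FiniteDimensional ℂ E]
    (H0 V P : E →ₗ[ℂ] E)
    (hH0 : LinearMap.IsSymmetric H0) (hV : LinearMap.IsSymmetric V)
    (hP : LinearMap.IsSymmetric P) (hPproj : P ∘ₗ P = P)
    (hPH0 : P ∘ₗ H0 = H0 ∘ₗ P)
    (a b Vmax : ℝ) (hab : b < a) (hVmax : 0 ≤ Vmax)
    (ha : ∀ v, P v = v → a * ‖v‖ ^ 2 ≤ (⟪v, H0 v⟫_ℂ).re)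
    (hb : ∀ v, ((LinearMap.id : E →ₗ[ℂ] E) - P) v = v →
      (⟪v, H0 v⟫_ℂ).re ≤ b * ‖v‖ ^ 2)
    (hoff1 : P ∘ₗ V ∘ₗ P = 0)
    (hoff2 : ((LinearMap.id : E →ₗ[ℂ] E) - P) ∘ₗ V ∘ₗ
        ((LinearMap.id : E →ₗ[ℂ] E) - P) = 0)
    (hVbound : ∀ v w, ‖⟪v, V w⟫_ℂ‖ ≤ Vmax * ‖v‖ * ‖w‖)
    (ψ : E) (hψ : ‖ψ‖ = 1) (Ek : ℝ) (heig : (H0 + V) ψ = (Ek : ℂ) • ψ)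
    (c2 : ℝ) (hc2 : c2 = (⟪ψ, P ψ⟫_ℂ).re) :
    c2 ^ 2 - c2 + Vmax ^ 2 / (a - b) ^ 2 ≥ 0 ∧
      (2 * Vmax < a - b →
        c2 ≥ 1 / 2 + Real.sqrt (1 - 4 * Vmax ^ 2 / (a - b) ^ 2) / 2 ∨
        c2 ≤ 1 / 2 - Real.sqrt (1 - 4 * Vmax ^ 2 / (a - b) ^ 2) / 2) :=
  eigenstate_splitting_general H0 V P hV hP hPproj hPH0 a b Vmax hab ha hb hoff1 hoff2 hVbound ψ hψ
    Ek heig c2 hc2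
end

section
/- With the block structure of the previous setup (H = H₀ + V, Π_↑H₀Π_↑ bounded below by E↑₀,min and above by E↑₀,max on ran Π_↑, Π_↓H₀Π_↓ bounded between E↓₀,min and E↓₀,max on ran Π_↓, off-diagonal block norm ≤ V_max, gap condition 2V_max < E↑₀,min − E↓₀,max), every eigenvalue E of H whose eigenvector ψ satisfies ⟨ψ|Π_↑|ψ⟩ ≥ ξ₁ > 1/2 obeys E↑₀,min − V_max ≤ E ≤ E↑₀,max + V_max, and every eigenvalue whose eigenvector satisfies ⟨ψ|Π_↓|ψ⟩ ≥ ξ₁ obeys E↓₀,min − V_max ≤ E ≤ E↓₀,max + V_max. -/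
open scoped InnerProductSpace


lemma aux_bound
    {E : Type*} [NormedAddCommGroup E] [InnerProductSpace ℂ E]
    (H0 V P : E →ₗ[ℂ] E)
    (hP : LinearMap.IsSymmetric P) (hPproj : P ∘ₗ P = P)
    (hPH0 : P ∘ₗ H0 = H0 ∘ₗ P)
    (Emin Emax Vmax : ℝ) (hVmax : 0 ≤ Vmax)
    (hbd : ∀ v, P v = v →
      Emin * ‖v‖ ^ 2 ≤ (⟪v, H0 v⟫_ℂ).re ∧ (⟪v, H0 v⟫_ℂ).re ≤ Emax * ‖v‖ ^ 2)
    (hoff : P ∘ₗ V ∘ₗ P = 0)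
    (hVbound : ∀ v w, ‖⟪v, V w⟫_ℂ‖ ≤ Vmax * ‖v‖ * ‖w‖)
    (ψ : E) (hψ : ‖ψ‖ = 1) (Ek : ℝ) (heig : (H0 + V) ψ = (Ek : ℂ) • ψ)
    (hw : (1:ℝ)/2 ≤ (⟪ψ, P ψ⟫_ℂ).re) :
    Emin - Vmax ≤ Ek ∧ Ek ≤ Emax + Vmax := by
  set u := P ψ with hu
  set w := ψ - u with hwdef
  have hPP : ∀ v, P (P v) = P v := fun v => congrArg (fun f => f v) hPproj
  have hPu : P u = u := hPP ψ
  have hPw : P w = 0 := by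
    rw [hwdef, map_sub, hPu, ← hu, sub_self]
  have hinner_u : ⟪ψ, P ψ⟫_ℂ = ⟪u, u⟫_ℂ := by
    calc ⟪ψ, P ψ⟫_ℂ = ⟪ψ, P u⟫_ℂ := by rw [hPu]
    _ = ⟪P ψ, u⟫_ℂ := (hP ψ u).symm
  have huψ : ⟪u, ψ⟫_ℂ = ⟪u, u⟫_ℂ := by
    calc ⟪u, ψ⟫_ℂ = ⟪P ψ, ψ⟫_ℂ := rfl
    _ = ⟪ψ, P ψ⟫_ℂ := hP ψ ψ
    _ = ⟪u, u⟫_ℂ := hinner_u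
  have hnormu : (⟪ψ, P ψ⟫_ℂ).re = ‖u‖ ^ 2 := by
    rw [hinner_u]; exact inner_self_eq_norm_sq (𝕜 := ℂ) u
  have horth : ⟪u, w⟫_ℂ = 0 := by
    rw [hwdef, inner_sub_right, huψ, sub_self]
  have hpyth : ‖u‖ ^ 2 + ‖w‖ ^ 2 = 1 := by
    have huw : u + w = ψ := by rw [hwdef]; abel
    have := norm_add_sq (𝕜 := ℂ) u w
    rw [huw, hψ, horth] at this
    simp at this
    linarith [this]
  have hu2 : (1:ℝ)/2 ≤ ‖u‖ ^ 2 := by rw [← hnormu]; exact hw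
  have hwu : ‖w‖ ≤ ‖u‖ := by
    have : ‖w‖ ^ 2 ≤ ‖u‖ ^ 2 := by linarith
    exact le_of_pow_le_pow_left₀ two_ne_zero (norm_nonneg u) this
  -- key equation
  have hH0w : ⟪u, H0 w⟫_ℂ = 0 := by
    have h1 : P (H0 w) = H0 (P w) := congrArg (fun f => f w) hPH0
    calc ⟪u, H0 w⟫_ℂ = ⟪P u, H0 w⟫_ℂ := by rw [hPu]
    _ = ⟪u, P (H0 w)⟫_ℂ := hP u (H0 w)
    _ = 0 := by rw [h1, hPw, map_zero, inner_zero_right]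
  have hVu : ⟪u, V u⟫_ℂ = 0 := by
    have h1 : P (V (P u)) = 0 := congrArg (fun f => f u) hoff
    rw [hPu] at h1
    calc ⟪u, V u⟫_ℂ = ⟪P u, V u⟫_ℂ := by rw [hPu]
    _ = ⟪u, P (V u)⟫_ℂ := hP u (V u)
    _ = 0 := by rw [h1, inner_zero_right]
  have key : (Ek : ℂ) * (‖u‖ ^ 2 : ℝ) = ⟪u, H0 u⟫_ℂ + ⟪u, V w⟫_ℂ := by
    have h1 : ⟪u, (H0 + V) ψ⟫_ℂ = (Ek : ℂ) * ⟪u, ψ⟫_ℂ := by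
      rw [heig, inner_smul_right]
    have h2 : ⟪u, ψ⟫_ℂ = ((‖u‖ ^ 2 : ℝ) : ℂ) := by
      rw [huψ, inner_self_eq_norm_sq_to_K]; norm_cast
    have hψuw : ψ = u + w := by rw [hwdef]; abel
    have h3 : ⟪u, (H0 + V) ψ⟫_ℂ = ⟪u, H0 u⟫_ℂ + ⟪u, V w⟫_ℂ := by
      rw [LinearMap.add_apply, inner_add_right, hψuw,
        map_add, map_add, inner_add_right, inner_add_right, hH0w, hVu]
      ring
    rw [← h3, h1, h2]
  have keyre : Ek * ‖u‖ ^ 2 = (⟪u, H0 u⟫_ℂ).re + (⟪u, V w⟫_ℂ).re := by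
    have := congrArg Complex.re key
    simpa [← Complex.ofReal_pow] using this
  have hVw : |(⟪u, V w⟫_ℂ).re| ≤ Vmax * ‖u‖ ^ 2 := by
    have h1 : |(⟪u, V w⟫_ℂ).re| ≤ ‖⟪u, V w⟫_ℂ‖ := Complex.abs_re_le_norm _
    have h2 := hVbound u w
    have h3 : Vmax * ‖u‖ * ‖w‖ ≤ Vmax * ‖u‖ * ‖u‖ := by
      apply mul_le_mul_of_nonneg_left hwu (by positivity)
    nlinarith
  obtain ⟨hlow, hhigh⟩ := hbd u hPu
  have habs := abs_le.mp hVw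
  constructor
  · nlinarith [hu2]
  · nlinarith [hu2]

/-- eigenvalue bounds for the `+` and `−` subspaces of
`H = H₀ + V`.  With the block structure of the eigenstate-splitting theorem
and the gap condition `2V_max < E↑₀,min − E↓₀,max`, every eigenvalue whose
normalized eigenvector has weight `≥ ξ₁` on ran Π_↑ lies in
`[E↑₀,min − V_max, E↑₀,max + V_max]`, and every eigenvalue whose eigenvector
has weight `≥ ξ₁` on ran Π_↓ lies in `[E↓₀,min − V_max, E↓₀,max + V_max]`. -/
theorem eigenvalue_bounds
    {E : Type*} [NormedAddCommGroup E] [InnerProductSpace ℂ E]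
    [FiniteDimensional ℂ E]
    (H0 V P : E →ₗ[ℂ] E)
    (hH0 : LinearMap.IsSymmetric H0) (hV : LinearMap.IsSymmetric V)
    (hP : LinearMap.IsSymmetric P) (hPproj : P ∘ₗ P = P)
    (hPH0 : P ∘ₗ H0 = H0 ∘ₗ P)
    (EupMin EupMax EdnMin EdnMax Vmax : ℝ) (hVmax : 0 ≤ Vmax)
    (hup : ∀ v, P v = v →
      EupMin * ‖v‖ ^ 2 ≤ (⟪v, H0 v⟫_ℂ).re ∧ (⟪v, H0 v⟫_ℂ).re ≤ EupMax * ‖v‖ ^ 2)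
    (hdn : ∀ v, ((LinearMap.id : E →ₗ[ℂ] E) - P) v = v →
      EdnMin * ‖v‖ ^ 2 ≤ (⟪v, H0 v⟫_ℂ).re ∧ (⟪v, H0 v⟫_ℂ).re ≤ EdnMax * ‖v‖ ^ 2)
    (hoff1 : P ∘ₗ V ∘ₗ P = 0)
    (hoff2 : ((LinearMap.id : E →ₗ[ℂ] E) - P) ∘ₗ V ∘ₗ
        ((LinearMap.id : E →ₗ[ℂ] E) - P) = 0)
    (hVbound : ∀ v w, ‖⟪v, V w⟫_ℂ‖ ≤ Vmax * ‖v‖ * ‖w‖)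
    (hgap : 2 * Vmax < EupMin - EdnMax)
    (ξ₁ : ℝ)
    (hξ₁ : ξ₁ = 1 / 2 + Real.sqrt (1 - 4 * Vmax ^ 2 / (EupMin - EdnMax) ^ 2) / 2)
    (ψ : E) (hψ : ‖ψ‖ = 1) (Ek : ℝ) (heig : (H0 + V) ψ = (Ek : ℂ) • ψ) :
    ((⟪ψ, P ψ⟫_ℂ).re ≥ ξ₁ → EupMin - Vmax ≤ Ek ∧ Ek ≤ EupMax + Vmax) ∧
    ((⟪ψ, ((LinearMap.id : E →ₗ[ℂ] E) - P) ψ⟫_ℂ).re ≥ ξ₁ →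
      EdnMin - Vmax ≤ Ek ∧ Ek ≤ EdnMax + Vmax) := by
  have hξhalf : (1:ℝ)/2 ≤ ξ₁ := by
    rw [hξ₁]
    have := Real.sqrt_nonneg (1 - 4 * Vmax ^ 2 / (EupMin - EdnMax) ^ 2)
    linarith
  set Q : E →ₗ[ℂ] E := (LinearMap.id : E →ₗ[ℂ] E) - P with hQdef
  have hQ : LinearMap.IsSymmetric Q := by
    intro x y
    simp only [hQdef, LinearMap.sub_apply, LinearMap.id_apply, inner_sub_left,
      inner_sub_right, hP x y]
  have hQproj : Q ∘ₗ Q = Q := by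
    ext v
    have h := congrArg (fun f => f v) hPproj
    simp only [LinearMap.comp_apply] at h
    simp only [hQdef, LinearMap.comp_apply, LinearMap.sub_apply,
      LinearMap.id_apply, map_sub, h]
    abel
  have hQH0 : Q ∘ₗ H0 = H0 ∘ₗ Q := by
    simp only [hQdef, LinearMap.sub_comp, LinearMap.comp_sub, LinearMap.id_comp,
      LinearMap.comp_id, hPH0]
  constructor
  · intro hwt
    exact aux_bound H0 V P hP hPproj hPH0 EupMin EupMax Vmax hVmax hup hoff1
      hVbound ψ hψ Ek heig (le_trans hξhalf hwt)
  · intro hwt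
    exact aux_bound H0 V Q hQ hQproj hQH0 EdnMin EdnMax Vmax hVmax hdn hoff2
      hVbound ψ hψ Ek heig (le_trans hξhalf hwt)
end

section
/- Let H be Hermitian and suppose its eigenvectors split into two orthogonal families labelled + and −, with all − eigenvalues at most E⁻_max. Let ψ be a normalized state with ⟨ψ|H|ψ⟩ ≥ E↑₀,min > E⁻_max and ⟨ψ|(H − ⟨H⟩)²|ψ⟩ ≤ σ². Then the weight of ψ on the − eigenspace satisfies ⟨ψ|Π_−|ψ⟩ ≤ σ²/(E⁻_max − E↑₀,min)², where Π_− is the orthogonal projection onto the span of the − eigenvectors. -/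
/-!
Let `v = Π₋ ψ` and `μ = ⟪ψ, H ψ⟫`. Since `Π₋` is a symmetric projection commuting with `H`,
`⟪v, (μ - H) v⟫ = ⟪v, (μ - H) ψ⟫`, so the band condition `H ≤ E⁻_max` on the range of `Π₋`
and Cauchy–Schwarz give `(μ - E⁻_max) ‖v‖² ≤ ‖v‖ ‖(H - μ) ψ‖`. Hence
`(E↑₀,min - E⁻_max) ‖v‖ ≤ σ`, and `⟪ψ, Π₋ ψ⟫ = ‖v‖²`.
-/

open scoped InnerProductSpace
open RCLike

namespace LinearMap.IsSymmetricProjection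

variable {𝕜 E : Type*} [RCLike 𝕜] [NormedAddCommGroup E] [InnerProductSpace 𝕜 E]
  {P H : E →ₗ[𝕜] E}

theorem apply_apply (hP : P.IsSymmetricProjection) (x : E) : P (P x) = P x :=
  congrArg (· x) hP.isIdempotentElem.eq

theorem inner_apply_of_apply_eq (hP : P.IsSymmetricProjection) {v : E} (hv : P v = v) (x : E) :
    ⟪v, P x⟫_𝕜 = ⟪v, x⟫_𝕜 := by
  rw [← hP.isSymmetric, hv]

theorem re_inner_apply_eq_norm_sq (hP : P.IsSymmetricProjection) (x : E) :
    re ⟪x, P x⟫_𝕜 = ‖P x‖ ^ 2 := by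
  rw [← hP.apply_apply x, ← hP.isSymmetric, hP.apply_apply, inner_self_eq_norm_sq]

theorem sub_mul_norm_apply_le (hP : P.IsSymmetricProjection) (hPH : Commute P H) {c : ℝ}
    (hH : ∀ v, P v = v → re ⟪v, H v⟫_𝕜 ≤ c * ‖v‖ ^ 2) (μ : ℝ) (x : E) :
    (μ - c) * ‖P x‖ ≤ ‖H x - (μ : 𝕜) • x‖ := by
  set v := P x
  have hv : P v = v := hP.apply_apply x
  have hvHv : ⟪v, H v⟫_𝕜 = ⟪v, H x⟫_𝕜 := by
    rw [← hP.inner_apply_of_apply_eq hv (H x)]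
    exact congrArg _ (LinearMap.congr_fun hPH.eq x).symm
  have hvv : ‖v‖ ^ 2 = re ⟪v, x⟫_𝕜 := by
    rw [← hP.inner_apply_of_apply_eq hv, inner_self_eq_norm_sq]
  have key : (μ - c) * ‖v‖ ^ 2 ≤ ‖v‖ * ‖H x - (μ : 𝕜) • x‖ :=
    calc (μ - c) * ‖v‖ ^ 2 ≤ μ * ‖v‖ ^ 2 - re ⟪v, H v⟫_𝕜 := by linarith [hH v hv]
      _ = re ⟪v, (μ : 𝕜) • x - H x⟫_𝕜 := by
        rw [hvv, hvHv, inner_sub_right, inner_smul_right, map_sub, re_ofReal_mul]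
      _ ≤ ‖v‖ * ‖H x - (μ : 𝕜) • x‖ := by
        rw [← norm_neg (H x - _), neg_sub]
        exact re_inner_le_norm _ _
  rcases (norm_nonneg v).eq_or_lt with h0 | hpos
  · rw [← h0, mul_zero]
    exact norm_nonneg _
  · nlinarith

end LinearMap.IsSymmetricProjection

theorem low_variance_small_overlap_general
    {E : Type*} [NormedAddCommGroup E] [InnerProductSpace ℂ E]
    (H Pm : E →ₗ[ℂ] E)
    (hPm : LinearMap.IsSymmetric Pm)
    (hPmProj : Pm ∘ₗ Pm = Pm) (hcomm : Pm ∘ₗ H = H ∘ₗ Pm)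
    (EmMax E0min σ : ℝ)
    (hminus : ∀ v, Pm v = v → (⟪v, H v⟫_ℂ).re ≤ EmMax * ‖v‖ ^ 2)
    (ψ : E)
    (hmean : E0min ≤ (⟪ψ, H ψ⟫_ℂ).re)
    (hgap : EmMax < E0min)
    (hvar : ‖H ψ - (((⟪ψ, H ψ⟫_ℂ).re : ℝ) : ℂ) • ψ‖ ^ 2 ≤ σ ^ 2) :
    (⟪ψ, Pm ψ⟫_ℂ).re ≤ σ ^ 2 / (EmMax - E0min) ^ 2 := by
  have hP : Pm.IsSymmetricProjection := ⟨hPmProj, hPm⟩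
  have hbound : (E0min - EmMax) * ‖Pm ψ‖ ≤ ‖H ψ - (((⟪ψ, H ψ⟫_ℂ).re : ℝ) : ℂ) • ψ‖ :=
    (mul_le_mul_of_nonneg_right (by linarith) (norm_nonneg _)).trans
      (hP.sub_mul_norm_apply_le hcomm hminus _ ψ)
  rw [← RCLike.re_to_complex, hP.re_inner_apply_eq_norm_sq,
    le_div_iff₀ (sq_pos_of_neg (sub_neg.mpr hgap))]
  calc ‖Pm ψ‖ ^ 2 * (EmMax - E0min) ^ 2 = ((E0min - EmMax) * ‖Pm ψ‖) ^ 2 := by ring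
    _ ≤ ‖H ψ - (((⟪ψ, H ψ⟫_ℂ).re : ℝ) : ℂ) • ψ‖ ^ 2 :=
      pow_le_pow_left₀ (mul_nonneg (by linarith) (norm_nonneg _)) hbound 2
    _ ≤ σ ^ 2 := hvar

/-- Chebyshev-type overlap bound.  `Π_−` is an orthogonal
projection commuting with the Hermitian `H`, on whose range `H ≤ E⁻_max`.
A normalized state `ψ` with energy mean `≥ E↑₀,min > E⁻_max` and energy
variance `≤ σ²` has weight at most `σ²/(E⁻_max − E↑₀,min)²` on ran Π_−. -/
theorem low_variance_small_overlap
    {E : Type*} [NormedAddCommGroup E] [InnerProductSpace ℂ E]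
    [FiniteDimensional ℂ E]
    (H Pm : E →ₗ[ℂ] E)
    (hH : LinearMap.IsSymmetric H) (hPm : LinearMap.IsSymmetric Pm)
    (hPmProj : Pm ∘ₗ Pm = Pm) (hcomm : Pm ∘ₗ H = H ∘ₗ Pm)
    (EmMax E0min σ : ℝ)
    (hminus : ∀ v, Pm v = v → (⟪v, H v⟫_ℂ).re ≤ EmMax * ‖v‖ ^ 2)
    (ψ : E) (hψ : ‖ψ‖ = 1)
    (hmean : E0min ≤ (⟪ψ, H ψ⟫_ℂ).re)
    (hgap : EmMax < E0min)
    (hvar : ‖H ψ - (((⟪ψ, H ψ⟫_ℂ).re : ℝ) : ℂ) • ψ‖ ^ 2 ≤ σ ^ 2) :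
    (⟪ψ, Pm ψ⟫_ℂ).re ≤ σ ^ 2 / (EmMax - E0min) ^ 2 :=
  low_variance_small_overlap_general H Pm hPm hPmProj hcomm EmMax E0min σ hminus ψ hmean hgap hvar
end

section
/- Let H be Hermitian with orthogonal invariant decomposition into + and − eigenspaces (projections Π_+, Π_−, with Π_+ + Π_− = I), and suppose every unit vector ψ in the range of Π_↑ satisfies ⟨ψ|Π_−|ψ⟩ ≤ ε², while every unit vector in the range of Π_↓ = I − Π_↑ satisfies ⟨ψ|Π_+|ψ⟩ ≤ ε². Then for U = exp(iHt) and any unit vector ψ ∈ ran Π_↑: ‖Π_↓ U ψ‖ ≤ 2ε and ‖Π_↑ U ψ‖ ≥ √(1 − 4ε²) (assuming ε ≤ 1/2), for all t. -/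
open scoped InnerProductSpace


lemma norm_sq_symm_proj {E : Type*} [NormedAddCommGroup E] [InnerProductSpace ℂ E]
    (S : E →ₗ[ℂ] E) (hS : LinearMap.IsSymmetric S) (hSp : S ∘ₗ S = S) (w : E) :
    ‖S w‖ ^ 2 = (⟪w, S w⟫_ℂ).re := by
  have h2 : S (S w) = S w := by
    have := LinearMap.congr_fun hSp w
    simpa using this
  have h3 : ⟪S w, S w⟫_ℂ = ⟪w, S w⟫_ℂ := by
    calc ⟪S w, S w⟫_ℂ = ⟪w, S (S w)⟫_ℂ := hS w (S w)
    _ = ⟪w, S w⟫_ℂ := by rw [h2]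
  rw [← h3]
  exact (inner_self_eq_norm_sq (𝕜 := ℂ) (S w)).symm


/-- no spin flip at all times.  `U = e^{iHt}` commutes with the
`H`-invariant projections Π_±; every unit vector in ran Π_↑ has weight `≤ ε²`
on ran Π_− and every unit vector in ran Π_↓ has weight `≤ ε²` on ran Π_+.
Then for a unit `ψ ∈ ran Π_↑`: `‖Π_↓Uψ‖ ≤ 2ε` and `‖Π_↑Uψ‖ ≥ √(1−4ε²)`. -/
theorem spin_flip_amplitude_bound
    {E : Type*} [NormedAddCommGroup E] [InnerProductSpace ℂ E]
    [FiniteDimensional ℂ E]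
    (U P Pp Pm : E →ₗ[ℂ] E)
    (hUiso : ∀ v, ‖U v‖ = ‖v‖)
    (hP : LinearMap.IsSymmetric P) (hPproj : P ∘ₗ P = P)
    (hPp : LinearMap.IsSymmetric Pp) (hPpProj : Pp ∘ₗ Pp = Pp)
    (hPm : LinearMap.IsSymmetric Pm) (hPmProj : Pm ∘ₗ Pm = Pm)
    (hsum : Pp + Pm = (LinearMap.id : E →ₗ[ℂ] E))
    (hUPp : U ∘ₗ Pp = Pp ∘ₗ U) (hUPm : U ∘ₗ Pm = Pm ∘ₗ U)
    (ε : ℝ) (hε0 : 0 ≤ ε) (hε : ε ≤ 1 / 2)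
    (hup : ∀ v, P v = v → (⟪v, Pm v⟫_ℂ).re ≤ ε ^ 2 * ‖v‖ ^ 2)
    (hdn : ∀ v, ((LinearMap.id : E →ₗ[ℂ] E) - P) v = v →
      (⟪v, Pp v⟫_ℂ).re ≤ ε ^ 2 * ‖v‖ ^ 2)
    (ψ : E) (hψ : ‖ψ‖ = 1) (hψup : P ψ = ψ) :
    ‖((LinearMap.id : E →ₗ[ℂ] E) - P) (U ψ)‖ ≤ 2 * ε ∧
    Real.sqrt (1 - 4 * ε ^ 2) ≤ ‖P (U ψ)‖ := by
  set Q : E →ₗ[ℂ] E := (LinearMap.id : E →ₗ[ℂ] E) - P with hQdef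
  have hQsym : LinearMap.IsSymmetric Q := by
    intro x y
    simp [hQdef, inner_sub_left, inner_sub_right, hP x y]
  have hQproj : Q ∘ₗ Q = Q := by
    ext w
    have := LinearMap.congr_fun hPproj w
    simp only [LinearMap.comp_apply] at this ⊢
    simp [hQdef, map_sub, this]
  -- bound on ‖Pm ψ‖
  have hPmψ : ‖Pm ψ‖ ≤ ε := by
    have h1 := hup ψ hψup
    have h2 := norm_sq_symm_proj Pm hPm hPmProj ψ
    rw [hψ] at h1
    nlinarith [norm_nonneg (Pm ψ)]
  set v := Q (U ψ) with hvdef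
  have hQv : Q v = v := by
    have := LinearMap.congr_fun hQproj (U ψ)
    simpa [hvdef] using this
  have hPpv : ‖Pp v‖ ≤ ε * ‖v‖ := by
    have h1 := hdn v hQv
    have h2 := norm_sq_symm_proj Pp hPp hPpProj v
    nlinarith [norm_nonneg (Pp v), norm_nonneg v, mul_nonneg hε0 (norm_nonneg v)]
  have hUψ : ‖U ψ‖ = 1 := by rw [hUiso, hψ]
  -- decomposition
  have hdecomp : U ψ = Pp (U ψ) + Pm (U ψ) := by
    have := LinearMap.congr_fun hsum (U ψ)
    simpa using this.symm
  have hnormv : ‖v‖ ^ 2 = (⟪U ψ, v⟫_ℂ).re := norm_sq_symm_proj Q hQsym hQproj (U ψ)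
  have hPmU : Pm (U ψ) = U (Pm ψ) := (LinearMap.congr_fun hUPm ψ).symm
  have term1 : (⟪Pp (U ψ), v⟫_ℂ).re ≤ ε * ‖v‖ := by
    have h1 : ⟪Pp (U ψ), v⟫_ℂ = ⟪U ψ, Pp v⟫_ℂ := hPp (U ψ) v
    calc (⟪Pp (U ψ), v⟫_ℂ).re = (⟪U ψ, Pp v⟫_ℂ).re := by rw [h1]
      _ ≤ ‖⟪U ψ, Pp v⟫_ℂ‖ := RCLike.re_le_norm (K := ℂ) _
      _ ≤ ‖U ψ‖ * ‖Pp v‖ := norm_inner_le_norm _ _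
      _ = ‖Pp v‖ := by rw [hUψ, one_mul]
      _ ≤ ε * ‖v‖ := hPpv
  have term2 : (⟪Pm (U ψ), v⟫_ℂ).re ≤ ε * ‖v‖ := by
    calc (⟪Pm (U ψ), v⟫_ℂ).re ≤ ‖⟪Pm (U ψ), v⟫_ℂ‖ := RCLike.re_le_norm (K := ℂ) _
      _ ≤ ‖Pm (U ψ)‖ * ‖v‖ := norm_inner_le_norm _ _
      _ = ‖Pm ψ‖ * ‖v‖ := by rw [hPmU, hUiso]
      _ ≤ ε * ‖v‖ := mul_le_mul_of_nonneg_right hPmψ (norm_nonneg v)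
  have hsplit : (⟪U ψ, v⟫_ℂ).re = (⟪Pp (U ψ), v⟫_ℂ).re + (⟪Pm (U ψ), v⟫_ℂ).re := by
    conv_lhs => rw [hdecomp]
    rw [inner_add_left, Complex.add_re]
  have hbound : ‖v‖ ^ 2 ≤ 2 * ε * ‖v‖ := by
    rw [hnormv, hsplit]; linarith
  have hv2ε : ‖v‖ ≤ 2 * ε := by
    nlinarith [norm_nonneg v]
  refine ⟨hv2ε, ?_⟩
  -- Pythagorean identity
  have hpyth : ‖P (U ψ)‖ ^ 2 + ‖v‖ ^ 2 = 1 := by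
    rw [norm_sq_symm_proj P hP hPproj, hnormv]
    have hadd : ⟪U ψ, P (U ψ)⟫_ℂ + ⟪U ψ, v⟫_ℂ = ⟪U ψ, U ψ⟫_ℂ := by
      rw [← inner_add_right]
      congr 1
      simp [hvdef, hQdef]
    have h1 : (⟪U ψ, U ψ⟫_ℂ).re = ‖U ψ‖ ^ 2 := inner_self_eq_norm_sq (𝕜 := ℂ) (U ψ)
    rw [← Complex.add_re, hadd, h1, hUψ]
    norm_num
  have h2 : 1 - 4 * ε ^ 2 ≤ ‖P (U ψ)‖ ^ 2 := by nlinarith [norm_nonneg v]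
  calc Real.sqrt (1 - 4 * ε ^ 2) ≤ Real.sqrt (‖P (U ψ)‖ ^ 2) := Real.sqrt_le_sqrt h2
    _ = ‖P (U ψ)‖ := Real.sqrt_sq (norm_nonneg _)
end

section
/- Under the hypotheses of the previous statement (U commutes with Π_±, and cross-overlaps ⟨ψ|Π_∓|ψ⟩ ≤ ε² for unit ψ in ran Π_↑ or ran Π_↓ respectively), let S_z = (ħ/2)(Π_↑ − Π_↓). Then for any unit vector ψ in ran Π_↑ and all times t: ⟨ψ|U(t)† S_z U(t)|ψ⟩ ≥ (ħ/2)(1 − 8ε²); and for any unit vector in ran Π_↓: ⟨ψ|U(t)† S_z U(t)|ψ⟩ ≤ −(ħ/2)(1 − 8ε²). -/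
open scoped InnerProductSpace


private lemma sq_le_imp {a b : ℝ} (ha : 0 ≤ a) (hb : 0 ≤ b) (h : a ^ 2 ≤ b ^ 2) :
    a ≤ b := by nlinarith

private lemma proj_norm_sq {E : Type*} [NormedAddCommGroup E] [InnerProductSpace ℂ E]
    (T : E →ₗ[ℂ] E) (hT : LinearMap.IsSymmetric T) (hT2 : T ∘ₗ T = T) (x : E) :
    ‖T x‖ ^ 2 = (⟪x, T x⟫_ℂ).re := by
  have h2 : T (T x) = T x := by
    have := LinearMap.congr_fun hT2 x; simpa using this
  have h3 : ⟪T x, T x⟫_ℂ = ⟪x, T x⟫_ℂ := by rw [hT x (T x), h2]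
  rw [← inner_self_eq_norm_sq (𝕜 := ℂ) (T x), h3]; rfl

private lemma proj_contr {E : Type*} [NormedAddCommGroup E] [InnerProductSpace ℂ E]
    (T : E →ₗ[ℂ] E) (hT : LinearMap.IsSymmetric T) (hT2 : T ∘ₗ T = T) (x : E) :
    ‖T x‖ ≤ ‖x‖ := by
  have h := proj_norm_sq T hT hT2 x
  have h2 : (⟪x, T x⟫_ℂ).re ≤ ‖x‖ * ‖T x‖ := re_inner_le_norm (𝕜 := ℂ) x (T x)
  rcases eq_or_lt_of_le (norm_nonneg (T x)) with h0 | h0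
  · rw [← h0]; exact norm_nonneg x
  · nlinarith

private lemma cross_bound {E : Type*} [NormedAddCommGroup E] [InnerProductSpace ℂ E]
    (R A : E →ₗ[ℂ] E) (hR : LinearMap.IsSymmetric R) (hR2 : R ∘ₗ R = R)
    (hA : LinearMap.IsSymmetric A) (hA2 : A ∘ₗ A = A)
    (ε : ℝ) (hε0 : 0 ≤ ε)
    (hyp : ∀ v, R v = v → (⟪v, A v⟫_ℂ).re ≤ ε ^ 2 * ‖v‖ ^ 2) (w : E) :
    ‖R (A w)‖ ≤ ε * ‖w‖ := by
  set v := R (A w) with hv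
  have hRv : R v = v := by
    have := LinearMap.congr_fun hR2 (A w); simpa using this
  have hAv : ‖A v‖ ≤ ε * ‖v‖ := by
    refine sq_le_imp (norm_nonneg _) (by positivity) ?_
    rw [proj_norm_sq A hA hA2 v]
    calc (⟪v, A v⟫_ℂ).re ≤ ε ^ 2 * ‖v‖ ^ 2 := hyp v hRv
      _ = (ε * ‖v‖) ^ 2 := by ring
  have hvsq : ‖v‖ ^ 2 = (⟪w, A v⟫_ℂ).re := by
    have h1 := proj_norm_sq R hR hR2 (A w)
    have h2 : ⟪A w, v⟫_ℂ = ⟪w, A v⟫_ℂ := hA w v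
    rw [← hv] at h1; rw [h1, h2]
  have h3 : (⟪w, A v⟫_ℂ).re ≤ ‖w‖ * ‖A v‖ := re_inner_le_norm (𝕜 := ℂ) w (A v)
  have h4 : ‖v‖ ^ 2 ≤ ‖w‖ * (ε * ‖v‖) := by
    rw [hvsq]
    exact h3.trans (mul_le_mul_of_nonneg_left hAv (norm_nonneg w))
  rcases eq_or_lt_of_le (norm_nonneg v) with h0 | h0
  · rw [← h0]; positivity
  · nlinarith

/-- Main wrong-spin bound. -/
private lemma key {E : Type*} [NormedAddCommGroup E] [InnerProductSpace ℂ E]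
    (U R A B : E →ₗ[ℂ] E) (hUiso : ∀ v, ‖U v‖ = ‖v‖)
    (hR : LinearMap.IsSymmetric R) (hR2 : R ∘ₗ R = R)
    (hA : LinearMap.IsSymmetric A) (hA2 : A ∘ₗ A = A)
    (hAB : A + B = (LinearMap.id : E →ₗ[ℂ] E))
    (hUB : U ∘ₗ B = B ∘ₗ U)
    (ε : ℝ) (hε0 : 0 ≤ ε)
    (hyp : ∀ v, R v = v → (⟪v, A v⟫_ℂ).re ≤ ε ^ 2 * ‖v‖ ^ 2)
    (ψ : E) (hψ : ‖ψ‖ = 1) (hBψ : ‖B ψ‖ ≤ ε) :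
    (⟪U ψ, R (U ψ)⟫_ℂ).re ≤ 4 * ε ^ 2 := by
  set φ := U ψ with hφ
  have hφ1 : ‖φ‖ = 1 := by rw [hφ, hUiso, hψ]
  have hBφ : B φ = U (B ψ) := by
    have := LinearMap.congr_fun hUB ψ; simpa using this.symm
  have hBφn : ‖B φ‖ ≤ ε := by rw [hBφ, hUiso]; exact hBψ
  have hdecomp : φ = A φ + B φ := by
    have := LinearMap.congr_fun hAB φ; simpa using this.symm
  have hRsplit : R φ = R (A φ) + R (B φ) := by
    conv_lhs => rw [hdecomp]
    exact map_add R _ _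
  have hn1 : ‖R (A φ)‖ ≤ ε := by
    have := cross_bound R A hR hR2 hA hA2 ε hε0 hyp φ
    rwa [hφ1, mul_one] at this
  have hn2 : ‖R (B φ)‖ ≤ ε := (proj_contr R hR hR2 (B φ)).trans hBφn
  have hRφ : ‖R φ‖ ≤ 2 * ε := by
    rw [hRsplit]
    calc ‖R (A φ) + R (B φ)‖ ≤ ‖R (A φ)‖ + ‖R (B φ)‖ := norm_add_le _ _
      _ ≤ 2 * ε := by linarith
  calc (⟪φ, R φ⟫_ℂ).re = ‖R φ‖ ^ 2 := (proj_norm_sq R hR hR2 φ).symm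
    _ ≤ (2 * ε) ^ 2 := by
        apply pow_le_pow_left₀ (norm_nonneg _) hRφ
    _ = 4 * ε ^ 2 := by ring

/-- Theorem 4 of the paper: the z-polarization never decays.
With `S_z = (hbar/2)(Π_↑ − Π_↓)` and the overlap hypotheses of the previous
statement, any unit vector in ran Π_↑ satisfies
`⟨ψ|U†S_zU|ψ⟩ ≥ (hbar/2)(1 − 8ε²)` for all times, and any unit vector in
ran Π_↓ satisfies `⟨ψ|U†S_zU|ψ⟩ ≤ −(hbar/2)(1 − 8ε²)`. -/
theorem z_polarization_bound
    {E : Type*} [NormedAddCommGroup E] [InnerProductSpace ℂ E]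
    [FiniteDimensional ℂ E]
    (U P Pp Pm : E →ₗ[ℂ] E)
    (hUiso : ∀ v, ‖U v‖ = ‖v‖)
    (hP : LinearMap.IsSymmetric P) (hPproj : P ∘ₗ P = P)
    (hPp : LinearMap.IsSymmetric Pp) (hPpProj : Pp ∘ₗ Pp = Pp)
    (hPm : LinearMap.IsSymmetric Pm) (hPmProj : Pm ∘ₗ Pm = Pm)
    (hsum : Pp + Pm = (LinearMap.id : E →ₗ[ℂ] E))
    (hUPp : U ∘ₗ Pp = Pp ∘ₗ U) (hUPm : U ∘ₗ Pm = Pm ∘ₗ U)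
    (ε : ℝ) (hε0 : 0 ≤ ε) (hε : ε ≤ 1 / 2)
    (hup : ∀ v, P v = v → (⟪v, Pm v⟫_ℂ).re ≤ ε ^ 2 * ‖v‖ ^ 2)
    (hdn : ∀ v, ((LinearMap.id : E →ₗ[ℂ] E) - P) v = v →
      (⟪v, Pp v⟫_ℂ).re ≤ ε ^ 2 * ‖v‖ ^ 2)
    (hbar : ℝ) (hhbar : 0 < hbar)
    (Sz : E →ₗ[ℂ] E)
    (hSz : Sz = ((hbar / 2 : ℝ) : ℂ) •
      (P - ((LinearMap.id : E →ₗ[ℂ] E) - P))) :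
    (∀ ψ : E, ‖ψ‖ = 1 → P ψ = ψ →
      hbar / 2 * (1 - 8 * ε ^ 2) ≤ (⟪U ψ, Sz (U ψ)⟫_ℂ).re) ∧
    (∀ ψ : E, ‖ψ‖ = 1 → ((LinearMap.id : E →ₗ[ℂ] E) - P) ψ = ψ →
      (⟪U ψ, Sz (U ψ)⟫_ℂ).re ≤ -(hbar / 2 * (1 - 8 * ε ^ 2))) := by
  set Q : E →ₗ[ℂ] E := (LinearMap.id : E →ₗ[ℂ] E) - P with hQdef
  have hQ : LinearMap.IsSymmetric Q := by
    intro x y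
    simp only [hQdef, LinearMap.sub_apply, LinearMap.id_apply, inner_sub_left,
      inner_sub_right, hP x y]
  have hQ2 : Q ∘ₗ Q = Q := by
    ext x
    have h := LinearMap.congr_fun hPproj x
    simp only [LinearMap.comp_apply] at h
    simp [hQdef, LinearMap.sub_apply, map_sub, h]
  -- re ⟪φ, Sz φ⟫ in terms of P and Q parts
  have hre : ∀ φ : E, (⟪φ, Sz φ⟫_ℂ).re
      = hbar / 2 * ((⟪φ, P φ⟫_ℂ).re - (⟪φ, Q φ⟫_ℂ).re) := by
    intro φ
    rw [hSz]
    simp only [LinearMap.smul_apply, LinearMap.sub_apply, inner_smul_right,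
      inner_sub_right, Complex.re_ofReal_mul, Complex.sub_re, hQdef]
  have hPQ : ∀ φ : E, ‖φ‖ = 1 → (⟪φ, P φ⟫_ℂ).re = 1 - (⟪φ, Q φ⟫_ℂ).re := by
    intro φ hφ
    have hs : (⟪φ, φ⟫_ℂ).re = 1 := by
      have := inner_self_eq_norm_sq (𝕜 := ℂ) φ
      have h2 : (⟪φ, φ⟫_ℂ).re = ‖φ‖ ^ 2 := this
      rw [h2, hφ]; norm_num
    have : (⟪φ, Q φ⟫_ℂ).re = (⟪φ, φ⟫_ℂ).re - (⟪φ, P φ⟫_ℂ).re := by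
      simp [hQdef, LinearMap.sub_apply, inner_sub_right, Complex.sub_re]
    rw [this, hs]; ring
  constructor
  · intro ψ hψ hPψ
    have hBψ : ‖Pm ψ‖ ≤ ε := by
      refine sq_le_imp (norm_nonneg _) hε0 ?_
      rw [proj_norm_sq Pm hPm hPmProj ψ]
      have := hup ψ hPψ
      rwa [hψ, one_pow, mul_one] at this
    have hqb : (⟪U ψ, Q (U ψ)⟫_ℂ).re ≤ 4 * ε ^ 2 :=
      key U Q Pp Pm hUiso hQ hQ2 hPp hPpProj hsum hUPm ε hε0 hdn ψ hψ hBψ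
    have hφ1 : ‖U ψ‖ = 1 := by rw [hUiso, hψ]
    rw [hre (U ψ), hPQ (U ψ) hφ1]
    nlinarith [hqb]
  · intro ψ hψ hQψ
    have hBψ : ‖Pp ψ‖ ≤ ε := by
      refine sq_le_imp (norm_nonneg _) hε0 ?_
      rw [proj_norm_sq Pp hPp hPpProj ψ]
      have := hdn ψ hQψ
      rwa [hψ, one_pow, mul_one] at this
    have hsum' : Pm + Pp = (LinearMap.id : E →ₗ[ℂ] E) := by
      rw [add_comm]; exact hsum
    have hqb : (⟪U ψ, P (U ψ)⟫_ℂ).re ≤ 4 * ε ^ 2 :=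
      key U P Pm Pp hUiso hP hPproj hPm hPmProj hsum' hUPp ε hε0 hup ψ hψ hBψ
    have hφ1 : ‖U ψ‖ = 1 := by rw [hUiso, hψ]
    have h2 : (⟪U ψ, Q (U ψ)⟫_ℂ).re = 1 - (⟪U ψ, P (U ψ)⟫_ℂ).re := by
      have := hPQ (U ψ) hφ1; linarith
    rw [hre (U ψ), h2]
    nlinarith [hqb]
end

section
/- In the hyperfine Hamiltonian restricted to the subspace with L total down spins (electron plus nuclei), the off-diagonal flip-flop perturbation V = Σ_j (A_j/2)(S₊I_{j−} + S₋I_{j+}) satisfies ‖Π_↑ V Π_↓‖₂ ≤ (ħ²/2)·√(A[L]·A[N−L+1]), where A[k] denotes the sum of the k largest hyperfine coupling constants A_j and Π_↑, Π_↓ project onto electron-spin-up and electron-spin-down states. In particular ‖Π_↑VΠ_↓‖₂ ≤ (ħ²/2)·A_max with A_max = Σ_j A_j. -/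
/-!
Every column of `Π_↑VΠ_↓` flips one up nucleus down, so its absolute sum is at most
`(ħ²/2)` times a sum of `N − L + 1` couplings; every row restricted to the `L`-subspace
flips one of its `L` down nuclei up, so its absolute sum is at most `(ħ²/2)` times a sum of
`L` couplings. The Schur test `‖X‖₂² ≤ ‖X‖₁‖X‖_∞` then gives the bound. When `L > N` there
is no up nucleus left to flip and the block vanishes.
-/

open Matrix Finset

/-- Basis states of one electron (first component, `true` = up) and `N`
nuclear spin-1/2's. -/
abbrev SpinConfig (N : ℕ) := Bool × (Fin N → Bool)

/-- The flip-flop perturbation `V = Σ_j (A_j/2)(S₊I_{j−} + S₋I_{j+})` as a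
matrix in the product basis (matrix element `hbar²A_j/2` for flipping the
electron together with nucleus `j`). -/
noncomputable def flipFlopV (N : ℕ) (hbar : ℝ) (A : Fin N → ℝ) :
    Matrix (SpinConfig N) (SpinConfig N) ℂ := fun p q =>
  ∑ j, ((A j : ℂ) / 2) *
    ((if p.1 = true ∧ q.1 = false ∧ q.2 j = true ∧
          p.2 = Function.update q.2 j false then ((hbar : ℂ) ^ 2) else 0)
     + (if p.1 = false ∧ q.1 = true ∧ q.2 j = false ∧
          p.2 = Function.update q.2 j true then ((hbar : ℂ) ^ 2) else 0))

/-- Number of down (`false`) nuclear spins in a configuration. -/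
def downCount {N : ℕ} (σ : Fin N → Bool) : ℕ :=
  (Finset.univ.filter fun j => σ j = false).card

open Function

-- Schur test: `‖X‖₂² ≤ ‖X‖₁ ‖X‖_∞`.
theorem Matrix.sum_norm_mulVec_sq_le {ι κ 𝕜 : Type*} [Fintype ι] [Fintype κ]
    [SeminormedRing 𝕜] (M : Matrix ι κ 𝕜) (S : Finset κ) (x : κ → 𝕜)
    (hx : ∀ j ∉ S, x j = 0) {R C : ℝ} (hR : 0 ≤ R) (hrow : ∀ i, ∑ j ∈ S, ‖M i j‖ ≤ R)
    (hcol : ∀ j ∈ S, ∑ i, ‖M i j‖ ≤ C) :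
    ∑ i, ‖(M *ᵥ x) i‖ ^ 2 ≤ R * C * ∑ j, ‖x j‖ ^ 2 := by
  have hS : ∀ f : κ → ℝ, (∀ j ∉ S, f j = 0) → ∑ j ∈ S, f j = ∑ j, f j := fun f hf =>
    sum_subset (subset_univ S) fun j _ hj => hf j hj
  have hentry : ∀ i, ‖(M *ᵥ x) i‖ ≤ ∑ j ∈ S, ‖M i j‖ * ‖x j‖ := by
    intro i
    rw [hS _ fun j hj => by simp [hx j hj]]
    exact (norm_sum_le _ _).trans (sum_le_sum fun j _ => norm_mul_le _ _)
  have hsq : ∀ i, ‖(M *ᵥ x) i‖ ^ 2 ≤ R * ∑ j ∈ S, ‖M i j‖ * ‖x j‖ ^ 2 := fun i =>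
    calc ‖(M *ᵥ x) i‖ ^ 2 ≤ (∑ j ∈ S, ‖M i j‖ * ‖x j‖) ^ 2 := by gcongr; exact hentry i
      _ ≤ (∑ j ∈ S, ‖M i j‖) * ∑ j ∈ S, ‖M i j‖ * ‖x j‖ ^ 2 :=
        sum_sq_le_sum_mul_sum_of_sq_le_mul S (fun j _ => norm_nonneg _)
          (fun j _ => by positivity) fun j _ => le_of_eq (by ring)
      _ ≤ R * ∑ j ∈ S, ‖M i j‖ * ‖x j‖ ^ 2 := by gcongr; exact hrow i
  calc ∑ i, ‖(M *ᵥ x) i‖ ^ 2 ≤ ∑ i, R * ∑ j ∈ S, ‖M i j‖ * ‖x j‖ ^ 2 :=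
        sum_le_sum fun i _ => hsq i
    _ = R * ∑ j ∈ S, (∑ i, ‖M i j‖) * ‖x j‖ ^ 2 := by
        simp only [← mul_sum, sum_mul]
        rw [sum_comm]
    _ ≤ R * ∑ j ∈ S, C * ‖x j‖ ^ 2 := by gcongr with j hj; exact hcol j hj
    _ = R * C * ∑ j, ‖x j‖ ^ 2 := by
        rw [← mul_sum, hS _ fun j hj => by simp [hx j hj]]
        ring

theorem Function.apply_eq_and_eq_update_comm {α β : Type*} [DecidableEq α] {σ τ : α → β}
    {j : α} {b b' : β} : σ j = b ∧ τ = update σ j b' ↔ τ j = b' ∧ σ = update τ j b := by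
  simp only [eq_update_iff]
  grind

section Nuclear

variable {N : ℕ}

lemma downCount_update_true {σ : Fin N → Bool} {j : Fin N} (h : σ j = false) :
    downCount (update σ j true) + 1 = downCount σ := by
  have hfilter : (univ.filter fun i => update σ j true i = false)
      = (univ.filter fun i => σ i = false).erase j := by
    ext i
    by_cases hij : i = j <;> simp [hij]
  rw [downCount, hfilter, card_erase_add_one (by simpa using h)]
  rfl

lemma card_filter_eq_true_eq_sub_downCount (σ : Fin N → Bool) :
    #(univ.filter fun i => σ i = true) = N - downCount σ := by
  have := card_filter_add_card_filter_not (s := univ) fun i => σ i = false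
  simp only [Bool.not_eq_false, card_univ, Fintype.card_fin] at this
  rw [downCount]
  omega

end Nuclear

section FlipFlop

variable {N : ℕ} {hbar : ℝ} {A : Fin N → ℝ}

def electronDownSector (N d : ℕ) : Finset (SpinConfig N) :=
  univ.filter fun q => q.1 = false ∧ downCount q.2 = d

lemma norm_flipFlopV_le (hA : ∀ j, 0 ≤ A j) (p : SpinConfig N) {q : SpinConfig N}
    (hq : q.1 = false) :
    ‖flipFlopV N hbar A p q‖ ≤
      ∑ j, if p = (true, update q.2 j false) ∧ q.2 j = true then hbar ^ 2 / 2 * A j else 0 := by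
  refine (norm_sum_le _ _).trans (sum_le_sum fun j _ => ?_)
  have hlower : (p.1 = true ∧ q.1 = false ∧ q.2 j = true ∧ p.2 = update q.2 j false) ↔
      p = (true, update q.2 j false) ∧ q.2 j = true := by
    simp only [Prod.ext_iff, hq]
    tauto
  have hraise : ¬(p.1 = false ∧ q.1 = true ∧ q.2 j = false ∧ p.2 = update q.2 j true) := by
    simp [hq]
  rw [if_neg hraise, add_zero, if_congr hlower rfl rfl]
  split_ifs
  · refine le_of_eq ?_
    simp only [Complex.norm_mul, Complex.norm_div, Complex.norm_real, Real.norm_eq_abs,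
      abs_of_nonneg (hA j), Complex.norm_ofNat, norm_pow, sq_abs]
    ring
  · simp

lemma sum_norm_flipFlopV_col_le (hA : ∀ j, 0 ≤ A j) {q : SpinConfig N} (hq : q.1 = false)
    {B : ℝ} (hB : ∀ s : Finset (Fin N), #s = N - downCount q.2 → ∑ j ∈ s, A j ≤ B) :
    ∑ p, ‖flipFlopV N hbar A p q‖ ≤ hbar ^ 2 / 2 * B := by
  calc ∑ p, ‖flipFlopV N hbar A p q‖
      ≤ ∑ j, ∑ p, if p = (true, update q.2 j false) ∧ q.2 j = true then hbar ^ 2 / 2 * A j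
          else 0 := by
        rw [sum_comm]
        exact sum_le_sum fun p _ => norm_flipFlopV_le hA p hq
    _ = hbar ^ 2 / 2 * ∑ j ∈ univ.filter fun j => q.2 j = true, A j := by
        simp [ite_and, mul_sum, sum_filter, mul_ite]
    _ ≤ hbar ^ 2 / 2 * B := by
        gcongr
        exact hB _ (card_filter_eq_true_eq_sub_downCount q.2)

lemma sum_electronDownSector_norm_flipFlopV_le (hA : ∀ j, 0 ≤ A j) (p : SpinConfig N)
    {d : ℕ} {B : ℝ} (hB0 : 0 ≤ B)
    (hB : ∀ s : Finset (Fin N), #s = d + 1 → ∑ j ∈ s, A j ≤ B) :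
    ∑ q ∈ electronDownSector N d, ‖flipFlopV N hbar A p q‖ ≤ hbar ^ 2 / 2 * B := by
  have hterm : ∀ j, (∑ q ∈ electronDownSector N d,
      if p = (true, update q.2 j false) ∧ q.2 j = true then hbar ^ 2 / 2 * A j else 0) ≤
      if downCount p.2 = d + 1 ∧ p.2 j = false then hbar ^ 2 / 2 * A j else 0 := by
    intro j
    have hinvert : ∀ q ∈ electronDownSector N d,
        (p = (true, update q.2 j false) ∧ q.2 j = true) ↔
          (p.1 = true ∧ p.2 j = false) ∧ q = (false, update p.2 j true) := by
      intro q hq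
      have hq1 : q.1 = false := (mem_filter.1 hq).2.1
      simp only [Prod.ext_iff, hq1, true_and, and_assoc, and_comm (a := p.2 = _),
        apply_eq_and_eq_update_comm]
    rw [sum_congr rfl fun q hq => if_congr (hinvert q hq) rfl rfl]
    have ha : 0 ≤ hbar ^ 2 / 2 * A j := mul_nonneg (by positivity) (hA j)
    by_cases hp : p.1 = true ∧ p.2 j = false
    · have hd := downCount_update_true hp.2
      simp only [hp, true_and, and_true, sum_ite_eq']
      split_ifs with hmem hcount
      · exact le_rfl
      · simp only [electronDownSector, mem_filter] at hmem
        omega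
      · exact ha
      · exact le_rfl
    · rw [sum_eq_zero fun q _ => if_neg fun h => hp h.1]
      split_ifs <;> simp [ha]
  calc ∑ q ∈ electronDownSector N d, ‖flipFlopV N hbar A p q‖
      ≤ ∑ j, ∑ q ∈ electronDownSector N d,
          if p = (true, update q.2 j false) ∧ q.2 j = true then hbar ^ 2 / 2 * A j else 0 := by
        rw [sum_comm]
        exact sum_le_sum fun q hq => norm_flipFlopV_le hA p (mem_filter.1 hq).2.1
    _ ≤ ∑ j, if downCount p.2 = d + 1 ∧ p.2 j = false then hbar ^ 2 / 2 * A j else 0 :=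
        sum_le_sum fun j _ => hterm j
    _ ≤ hbar ^ 2 / 2 * B := by
        rw [← sum_filter]
        by_cases hcount : downCount p.2 = d + 1
        · simp only [hcount, true_and, ← mul_sum]
          gcongr
          exact hB _ hcount
        · simp only [hcount, false_and, filter_false, sum_empty]
          positivity

end FlipFlop
theorem sqrt_sum_norm_flipFlopV_mulVec_sq_le {N L : ℕ} (hL1 : 1 ≤ L)
    {hbar : ℝ} {A : Fin N → ℝ} (hA : ∀ j, 0 ≤ A j) {AL AR : ℝ}
    (hAL : ∀ s : Finset (Fin N), #s = L → ∑ j ∈ s, A j ≤ AL)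
    (hAR : ∀ s : Finset (Fin N), #s = N - L + 1 → ∑ j ∈ s, A j ≤ AR)
    {x : SpinConfig N → ℂ} (hsupp : ∀ q, x q ≠ 0 → q.1 = false ∧ downCount q.2 = L - 1) :
    √(∑ p, ‖(flipFlopV N hbar A).mulVec x p‖ ^ 2) ≤
      hbar ^ 2 / 2 * √(AL * AR) * √(∑ q, ‖x q‖ ^ 2) := by
  have hx : ∀ q ∉ electronDownSector N (L - 1), x q = 0 := fun q hq =>
    by_contra fun h => hq (by simpa [electronDownSector] using hsupp q h)
  have hsector : ∀ q ∈ electronDownSector N (L - 1), q.1 = false ∧ downCount q.2 = L - 1 :=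
    fun q hq => (mem_filter.1 hq).2
  have hL : L - 1 + 1 = L := by omega
  by_cases hLN : L ≤ N
  · have hAL0 : 0 ≤ AL := by
      obtain ⟨s, -, hs⟩ := exists_subset_card_eq (s := univ) (n := L)
        (by simpa [card_univ] using hLN : L ≤ #(univ : Finset (Fin N)))
      exact (sum_nonneg fun j _ => hA j).trans (hAL s hs)
    have hrow := fun p =>
      sum_electronDownSector_norm_flipFlopV_le (hbar := hbar) (d := L - 1) hA p hAL0 (hL ▸ hAL)
    have hcol := fun q hq => sum_norm_flipFlopV_col_le (hbar := hbar) hA (hsector q hq).1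
      fun s hs => hAR s (by rw [hs, (hsector q hq).2]; omega)
    have hsq := sum_norm_mulVec_sq_le _ _ x hx (mul_nonneg (by positivity) hAL0) hrow hcol
    calc √(∑ p, ‖(flipFlopV N hbar A).mulVec x p‖ ^ 2)
        ≤ √((hbar ^ 2 / 2) ^ 2 * (AL * AR) * ∑ q, ‖x q‖ ^ 2) :=
          Real.sqrt_le_sqrt (hsq.trans_eq (by ring))
      _ = hbar ^ 2 / 2 * √(AL * AR) * √(∑ q, ‖x q‖ ^ 2) := by
          rw [Real.sqrt_mul' _ (by positivity), Real.sqrt_mul (by positivity),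
            Real.sqrt_sq (by positivity)]
  · -- No `L` nuclei can be down, and no nucleus of a sector state is up.
    have hrow := fun p =>
      sum_electronDownSector_norm_flipFlopV_le (hbar := hbar) (d := L - 1) hA p le_rfl
        fun (s : Finset (Fin N)) hs => absurd (card_le_univ s) (by rw [Fintype.card_fin]; omega)
    have hcol := fun q hq =>
      sum_norm_flipFlopV_col_le (hbar := hbar) (B := 0) hA (hsector q hq).1 fun s hs => by
        rw [(card_eq_zero (s := s)).1 (by rw [hs, (hsector q hq).2]; omega), sum_empty]
    have hsq := sum_norm_mulVec_sq_le _ _ x hx (by positivity) hrow hcol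
    calc √(∑ p, ‖(flipFlopV N hbar A).mulVec x p‖ ^ 2) ≤ √0 :=
          Real.sqrt_le_sqrt (hsq.trans_eq (by ring))
      _ ≤ hbar ^ 2 / 2 * √(AL * AR) * √(∑ q, ‖x q‖ ^ 2) := by
          rw [Real.sqrt_zero]; positivity

/-- `AL` and `AR` stand for any upper bounds on sums of `L`, resp. `N − L + 1`, couplings,
such as `A[L]` and `A[N−L+1]`; since `x` is supported on electron-down states,
`Vx = Π_↑VΠ_↓x`. -/
theorem flip_flop_block_norm_bound_general
    (N L : ℕ) (hL1 : 1 ≤ L)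
    (hbar : ℝ) (A : Fin N → ℝ) (hA : ∀ j, 0 ≤ A j)
    (AL AR : ℝ)
    (hAL : ∀ s : Finset (Fin N), s.card = L → ∑ j ∈ s, A j ≤ AL)
    (hAR : ∀ s : Finset (Fin N), s.card = N - L + 1 → ∑ j ∈ s, A j ≤ AR)
    (x : SpinConfig N → ℂ)
    (hsupp : ∀ q, x q ≠ 0 → q.1 = false ∧ downCount q.2 = L - 1) :
    Real.sqrt (∑ p, ‖(flipFlopV N hbar A).mulVec x p‖ ^ 2) ≤
        hbar ^ 2 / 2 * Real.sqrt (AL * AR) *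
          Real.sqrt (∑ q, ‖x q‖ ^ 2) ∧
    Real.sqrt (∑ p, ‖(flipFlopV N hbar A).mulVec x p‖ ^ 2) ≤
        hbar ^ 2 / 2 * (∑ j, A j) * Real.sqrt (∑ q, ‖x q‖ ^ 2) := by
  have hsum_le : ∀ s : Finset (Fin N), ∑ j ∈ s, A j ≤ ∑ j, A j := fun s =>
    sum_le_sum_of_subset_of_nonneg (subset_univ s) fun j _ _ => hA j
  refine ⟨sqrt_sum_norm_flipFlopV_mulVec_sq_le hL1 hA hAL hAR hsupp, ?_⟩
  have h := sqrt_sum_norm_flipFlopV_mulVec_sq_le (hbar := hbar) hL1 hA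
    (fun s _ => hsum_le s) (fun s _ => hsum_le s) hsupp
  rwa [Real.sqrt_mul_self (sum_nonneg fun j _ => hA j)] at h

/-- norm bound on the off-diagonal block `Π_↑VΠ_↓` in the
subspace with `L` total down spins.  `AL` is any upper bound on the sums of
`L` of the couplings (hence in particular on `A[L]`, the sum of the `L`
largest) and `AR` any upper bound on sums of `N−L+1` of them; for every
vector `x` supported on electron-down states with `L` total down spins,
`‖Vx‖ = ‖Π_↑VΠ_↓x‖ ≤ (hbar²/2)√(AL·AR)‖x‖`, and in particular
`‖Vx‖ ≤ (hbar²/2)·A_max·‖x‖` with `A_max = Σ_j A_j`. -/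
theorem flip_flop_block_norm_bound
    (N L : ℕ) (hL1 : 1 ≤ L) (hLN : L ≤ N + 1)
    (hbar : ℝ) (A : Fin N → ℝ) (hA : ∀ j, 0 ≤ A j)
    (AL AR : ℝ)
    (hAL : ∀ s : Finset (Fin N), s.card = L → ∑ j ∈ s, A j ≤ AL)
    (hAR : ∀ s : Finset (Fin N), s.card = N - L + 1 → ∑ j ∈ s, A j ≤ AR)
    (x : SpinConfig N → ℂ)
    (hsupp : ∀ q, x q ≠ 0 → q.1 = false ∧ downCount q.2 = L - 1) :
    Real.sqrt (∑ p, ‖(flipFlopV N hbar A).mulVec x p‖ ^ 2) ≤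
        hbar ^ 2 / 2 * Real.sqrt (AL * AR) *
          Real.sqrt (∑ q, ‖x q‖ ^ 2) ∧
    Real.sqrt (∑ p, ‖(flipFlopV N hbar A).mulVec x p‖ ^ 2) ≤
        hbar ^ 2 / 2 * (∑ j, A j) * Real.sqrt (∑ q, ‖x q‖ ^ 2) :=
  flip_flop_block_norm_bound_general N L hL1 hbar A hA AL AR hAL hAR x hsupp
end
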